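/- arXiv:2004.00734 — 5 statements merged into one kernel-verified Lean document; each statement's English description precedes it below -/
import Mathlib

section
/- Let G be a Class 2 graph with maximum degree Δ and let xy be a critical edge of G (i.e., χ'(G − xy) < χ'(G)). Then x has at least Δ − d_G(y) + 1 neighbors of degree Δ other than y (Vizing's Adjacency Lemma). -/
open SimpleGraph

set_option linter.unusedSectionVars false
set_option linter.unnecessarySeqFocus false
set_option linter.unusedVariables false
set_option maxHeartbeats 1600000

/-- A proper edge coloring of `G` with `k` colors. -/
def IsProperEdgeColoring {V : Type*} (G : SimpleGraph V) (k : ℕ) (C : Sym2 V → ℕ) : Prop :=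
  (∀ e ∈ G.edgeSet, C e < k) ∧
    ∀ e₁ ∈ G.edgeSet, ∀ e₂ ∈ G.edgeSet, e₁ ≠ e₂ → (∃ v, v ∈ e₁ ∧ v ∈ e₂) → C e₁ ≠ C e₂

/-- The chromatic index of `G`. -/
noncomputable def chromaticIndex {V : Type*} (G : SimpleGraph V) : ℕ :=
  sInf {k | ∃ C, IsProperEdgeColoring G k C}

open Finset

namespace VAL

variable {V : Type*} [Fintype V] [DecidableEq V]

/-- Proper partial coloring of `G` with colors `< Δ`, where edge `f` is uncolored. -/
def PC (G : SimpleGraph V) (Δ : ℕ) (f : Sym2 V) (C : Sym2 V → ℕ) : Prop :=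
  (∀ e ∈ G.edgeSet, e ≠ f → C e < Δ) ∧
  ∀ ⦃u v w : V⦄, G.Adj u v → G.Adj u w → v ≠ w → s(u,v) ≠ f → s(u,w) ≠ f →
    C s(u,v) ≠ C s(u,w)

/-- Color `α` does not appear on any colored edge at `v`. -/
def Free (G : SimpleGraph V) (f : Sym2 V) (C : Sym2 V → ℕ) (v : V) (α : ℕ) : Prop :=
  ∀ w, G.Adj v w → s(v,w) ≠ f → C s(v,w) ≠ α

lemma isProperEdgeColoring_mono {G : SimpleGraph V} {k m : ℕ} {C : Sym2 V → ℕ}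
    (h : IsProperEdgeColoring G k C) (hkm : k ≤ m) : IsProperEdgeColoring G m C :=
  ⟨fun e he => lt_of_lt_of_le (h.1 e he) hkm, h.2⟩

lemma chromaticIndex_set_nonempty (G : SimpleGraph V) :
    {k | ∃ C, IsProperEdgeColoring G k C}.Nonempty := by
  classical
  refine ⟨Fintype.card (Sym2 V), fun e => (Fintype.equivFin (Sym2 V)) e, ?_, ?_⟩
  · intro e _; exact ((Fintype.equivFin (Sym2 V)) e).isLt
  · intro e₁ _ e₂ _ hne _
    simp only [ne_eq, Fin.val_eq_val, EmbeddingLike.apply_eq_iff_eq]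
    exact hne

/-- There is a proper coloring of `G` with exactly `chromaticIndex G` colors. -/
lemma exists_coloring_chromaticIndex (G : SimpleGraph V) :
    ∃ C, IsProperEdgeColoring G (chromaticIndex G) C :=
  Nat.sInf_mem (chromaticIndex_set_nonempty G)

lemma chromaticIndex_le_of_coloring {G : SimpleGraph V} {k : ℕ} {C : Sym2 V → ℕ}
    (h : IsProperEdgeColoring G k C) : chromaticIndex G ≤ k :=
  Nat.sInf_le ⟨C, h⟩


/-- From a proper coloring of `G.deleteEdges {f}` we get a `PC`. -/
lemma pc_of_deleteEdges {G : SimpleGraph V} {Δ : ℕ} {f : Sym2 V} {C : Sym2 V → ℕ}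
    (h : IsProperEdgeColoring (G.deleteEdges {f}) Δ C) : PC G Δ f C := by
  have hmem : ∀ e, e ∈ G.edgeSet → e ≠ f → e ∈ (G.deleteEdges {f}).edgeSet := by
    intro e he hne
    rw [SimpleGraph.edgeSet_deleteEdges]
    exact ⟨he, hne⟩
  constructor
  · intro e he hne; exact h.1 e (hmem e he hne)
  · intro u v w huv huw hvw h1 h2
    refine h.2 _ (hmem _ (G.mem_edgeSet.mpr huv) h1) _ (hmem _ (G.mem_edgeSet.mpr huw) h2) ?_ ⟨u, ?_, ?_⟩
    · simp only [ne_eq, Sym2.eq_iff]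
      push_neg
      exact ⟨fun _ => hvw, fun _ h'' => (G.ne_of_adj huv) h''.symm⟩
    · simp
    · simp

/-- Filling the hole of a `PC` with a color free at both endpoints yields a proper coloring. -/
lemma fill_hole {G : SimpleGraph V} {Δ : ℕ} {u v : V} {C : Sym2 V → ℕ} {α : ℕ}
    (hpc : PC G Δ s(u,v) C) (huv : G.Adj u v) (hα : α < Δ)
    (hu : Free G s(u,v) C u α) (hv : Free G s(u,v) C v α) :
    IsProperEdgeColoring G Δ (fun e => if e = s(u,v) then α else C e) := by
  classical
  constructor
  · intro e he
    by_cases h : e = s(u,v)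
    · simpa [h] using hα
    · simpa [h] using hpc.1 e he h
  · intro e₁ he₁ e₂ he₂ hne hshare
    obtain ⟨z, hz1, hz2⟩ := hshare
    -- write e₁ = s(z, w₁), e₂ = s(z, w₂)
    obtain ⟨w₁, rfl⟩ := Sym2.mem_iff_exists.mp hz1
    obtain ⟨w₂, rfl⟩ := Sym2.mem_iff_exists.mp hz2
    have ha1 : G.Adj z w₁ := G.mem_edgeSet.mp he₁
    have ha2 : G.Adj z w₂ := G.mem_edgeSet.mp he₂
    have hw : w₁ ≠ w₂ := fun h => hne (by rw [h])
    by_cases h1 : s(z,w₁) = s(u,v) <;> by_cases h2 : s(z,w₂) = s(u,v)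
    · exact absurd (h1.trans h2.symm) hne
    · simp only [if_pos h1, if_neg h2]
      -- e₂ is an edge at z, z ∈ s(u,v); α free at u and v
      have hz : z = u ∨ z = v := by
        have : z ∈ s(u,v) := h1 ▸ (Sym2.mem_mk_left z w₁)
        simpa using this
      rcases hz with rfl | rfl
      · exact (hu w₂ ha2 h2).symm
      · exact (hv w₂ ha2 h2).symm
    · simp only [if_neg h1, if_pos h2]
      have hz : z = u ∨ z = v := by
        have : z ∈ s(u,v) := h2 ▸ (Sym2.mem_mk_left z w₂)
        simpa using this
      rcases hz with rfl | rfl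
      · exact hu w₁ ha1 h1
      · exact hv w₁ ha1 h1
    · simp only [if_neg h1, if_neg h2]
      exact hpc.2 ha1 ha2 hw h1 h2


/-- Transfer a walk avoiding `x` from `K` to `H`. -/
lemma walk_transfer {K H : SimpleGraph V} {x : V}
    (hH : ∀ a b, K.Adj a b → a ≠ x → b ≠ x → H.Adj a b) :
    ∀ {a b : V} (r : K.Walk a b), (∀ z ∈ r.support, z ≠ x) → H.Reachable a b := by
  intro a b r
  induction r with
  | nil => exact fun _ => SimpleGraph.Reachable.refl _
  | @cons a' c' b' hadj r ih =>
    intro hsup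
    have h1 : a' ≠ x := hsup _ (by simp)
    have h2 : c' ≠ x := hsup _ (by simp)
    exact (SimpleGraph.Adj.reachable (hH _ _ hadj h1 h2)).trans
      (ih (fun z hz => hsup z (by simp [hz])))

lemma reach_extract {K H : SimpleGraph V} {x v₀ : V}
    (hH : ∀ a b, K.Adj a b → a ≠ x → b ≠ x → H.Adj a b)
    (hr : K.Reachable v₀ x) (hne : v₀ ≠ x) :
    ∃ u, K.Adj x u ∧ (u = v₀ ∨ H.Reachable u v₀) := by
  classical
  obtain ⟨w⟩ := hr.symm
  set p := w.toPath.val with hpdef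
  have hpath : p.IsPath := w.toPath.property
  clear_value p
  cases p with
  | nil => exact absurd rfl hne.symm
  | @cons _ u _ h q =>
    refine ⟨u, h, ?_⟩
    have hxq : x ∉ q.support := ((SimpleGraph.Walk.cons_isPath_iff h q).mp hpath).2
    by_cases hu : u = v₀
    · exact Or.inl hu
    · exact Or.inr (walk_transfer hH q (fun z hz hzx => hxq (hzx ▸ hz)))

/-- Degree at most one. -/
def D1 (H : SimpleGraph V) (v : V) : Prop := ∀ a b, H.Adj v a → H.Adj v b → a = b

/-- Interior vertices of a path have two distinct neighbors on the path. -/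
lemma path_interior {H : SimpleGraph V} :
    ∀ {a b : V} (p : H.Walk a b), p.IsPath → ∀ t ∈ p.support, t ≠ a → t ≠ b →
      ∃ c d, c ≠ d ∧ c ∈ p.support ∧ d ∈ p.support ∧ H.Adj t c ∧ H.Adj t d := by
  intro a b p
  induction p with
  | nil =>
    intro _ t ht hta _
    simp only [SimpleGraph.Walk.support_nil, List.mem_singleton] at ht
    exact absurd ht hta
  | @cons a a₁ b h' q ih =>
    intro hp t ht hta htb
    rw [SimpleGraph.Walk.support_cons, List.mem_cons] at ht
    rcases ht with rfl | ht
    · exact absurd rfl hta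
    by_cases h1 : t = a₁
    · subst h1
      cases q with
      | nil => exact absurd rfl htb
      | cons h₂ q₂ =>
        rename_i a₂
        refine ⟨a, a₂, ?_, by simp, by simp, h'.symm, h₂⟩
        intro hcon
        have hnd := (SimpleGraph.Walk.cons_isPath_iff h' _).mp hp
        refine hnd.2 ?_
        rw [hcon]
        simp
    · obtain ⟨c, d, hcd, hc, hd, h3, h4⟩ :=
        ih ((SimpleGraph.Walk.cons_isPath_iff h' q).mp hp).1 t ht h1 htb
      exact ⟨c, d, hcd, by simp [hc], by simp [hd], h3, h4⟩

/-- A degree-≤1 endpoint's neighbors lie on the path. -/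
lemma endpoint_closure {H : SimpleGraph V} {a b : V} (p : H.Walk a b)
    (hab : a ≠ b) (h1 : D1 H a) : ∀ s, H.Adj a s → s ∈ p.support := by
  cases p with
  | nil => exact absurd rfl hab
  | @cons _ u _ h q =>
    intro s hs
    have : s = u := h1 s u hs h
    simp [this]

lemma three_leaf {H : SimpleGraph V}
    (hdeg2 : ∀ v a b c, H.Adj v a → H.Adj v b → H.Adj v c → a = b ∨ a = c ∨ b = c)
    {v₁ v₂ v₃ : V} (h1 : D1 H v₁) (h2 : D1 H v₂) (h3 : D1 H v₃)
    (h12 : v₁ ≠ v₂) (h13 : v₁ ≠ v₃) (h23 : v₂ ≠ v₃)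
    (hr2 : H.Reachable v₁ v₂) (hr3 : H.Reachable v₁ v₃) : False := by
  classical
  obtain ⟨w⟩ := hr2
  set p := w.toPath.val with hpdef
  have hpath : p.IsPath := w.toPath.property
  clear_value p
  have hclosed : ∀ t ∈ p.support, ∀ s, H.Adj t s → s ∈ p.support := by
    intro t ht s hs
    by_cases hta : t = v₁
    · subst hta
      exact endpoint_closure p h12 h1 s hs
    · by_cases htb : t = v₂
      · subst htb
        have := endpoint_closure p.reverse h12.symm h2 s hs
        rwa [SimpleGraph.Walk.support_reverse, List.mem_reverse] at this
      · obtain ⟨c, d, hcd, hc, hd, hac, had⟩ := path_interior p hpath t ht hta htb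
        rcases hdeg2 t s c d hs hac had with h | h | h
        · exact h ▸ hc
        · exact h ▸ hd
        · exact absurd h hcd
  have hreach : ∀ {a z : V} (q : H.Walk a z), a ∈ p.support → z ∈ p.support := by
    intro a z q
    induction q with
    | nil => exact id
    | cons hadj r ih => exact fun ha => ih (hclosed _ ha _ hadj)
  have hv3 : v₃ ∈ p.support :=
    hreach (hr3.some) (SimpleGraph.Walk.start_mem_support p)
  obtain ⟨c, d, hcd, _, _, hac, had⟩ := path_interior p hpath v₃ hv3 h13.symm h23.symm
  exact hcd (h3 c d hac had)


/-- The subgraph of edges (other than the hole `f`) colored `β` or `γ`. -/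
def kG (G : SimpleGraph V) (f : Sym2 V) (C : Sym2 V → ℕ) (β γ : ℕ) : SimpleGraph V where
  Adj u w := G.Adj u w ∧ s(u,w) ≠ f ∧ (C s(u,w) = β ∨ C s(u,w) = γ)
  symm := ⟨by
    intro u w ⟨h1, h2, h3⟩
    rw [Sym2.eq_swap] at h2 h3
    exact ⟨h1.symm, h2, h3⟩⟩
  loopless := ⟨fun v h => (G.ne_of_adj h.1) rfl⟩

lemma kG_adj {G : SimpleGraph V} {f C β γ} {u w : V} :
    (kG G f C β γ).Adj u w ↔ G.Adj u w ∧ s(u,w) ≠ f ∧ (C s(u,w) = β ∨ C s(u,w) = γ) :=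
  Iff.rfl

open scoped Classical in
/-- Swap colors `β`, `γ` on the component of `v₀`. -/
noncomputable def swapC (G : SimpleGraph V) (f : Sym2 V) (C : Sym2 V → ℕ) (β γ : ℕ) (v₀ : V) :
    Sym2 V → ℕ := fun e =>
  if (∃ u w, e = s(u,w) ∧ (kG G f C β γ).Adj u w ∧ (kG G f C β γ).Reachable v₀ u)
  then (if C e = β then γ else β) else C e

section swap

variable {G : SimpleGraph V} {f : Sym2 V} {C : Sym2 V → ℕ} {β γ : ℕ} {v₀ : V}

/-- If the swap condition holds for an edge, every endpoint is reachable from v₀. -/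
lemma swap_cond_reach {u w : V}
    (h : ∃ a b, s(u,w) = s(a,b) ∧ (kG G f C β γ).Adj a b ∧ (kG G f C β γ).Reachable v₀ a) :
    (kG G f C β γ).Reachable v₀ u ∧ (kG G f C β γ).Reachable v₀ w ∧ (kG G f C β γ).Adj u w := by
  obtain ⟨a, b, he, hab, hra⟩ := h
  have hrb : (kG G f C β γ).Reachable v₀ b := hra.trans hab.reachable
  rw [Sym2.eq_iff] at he
  rcases he with ⟨rfl, rfl⟩ | ⟨rfl, rfl⟩
  · exact ⟨hra, hrb, hab⟩
  · exact ⟨hrb, hra, hab.symm⟩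

lemma swap_eq_of_not_cond {e : Sym2 V}
    (h : ¬ ∃ a b, e = s(a,b) ∧ (kG G f C β γ).Adj a b ∧ (kG G f C β γ).Reachable v₀ a) :
    swapC G f C β γ v₀ e = C e := by
  rw [swapC, if_neg h]

lemma swap_eq_of_not_adj {u w : V} (h : ¬ (kG G f C β γ).Adj u w) :
    swapC G f C β γ v₀ s(u,w) = C s(u,w) := by
  rw [swapC, if_neg]
  intro hc
  exact h (swap_cond_reach hc).2.2

lemma swap_eq_of_not_reach {u w : V} (h : ¬ (kG G f C β γ).Reachable v₀ u) :
    swapC G f C β γ v₀ s(u,w) = C s(u,w) := by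
  rw [swapC, if_neg]
  intro hc
  exact h (swap_cond_reach hc).1

lemma swap_eq_swap_of {u w : V} (hadj : (kG G f C β γ).Adj u w)
    (hr : (kG G f C β γ).Reachable v₀ u) :
    swapC G f C β γ v₀ s(u,w) = (if C s(u,w) = β then γ else β) := by
  rw [swapC, if_pos ⟨u, w, rfl, hadj, hr⟩]

/-- The swap preserves properness. -/
lemma swap_pc {Δ : ℕ} (hpc : PC G Δ f C) (hβ : β < Δ) (hγ : γ < Δ) (hβγ : β ≠ γ) :
    PC G Δ f (swapC G f C β γ v₀) := by
  constructor
  · intro e he hef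
    induction e with
    | _ u w =>
      by_cases h : (∃ a b, s(u,w) = s(a,b) ∧ (kG G f C β γ).Adj a b ∧
          (kG G f C β γ).Reachable v₀ a)
      · rw [swapC, if_pos h]
        split <;> [exact hγ; exact hβ]
      · rw [swapC, if_neg h]
        exact hpc.1 _ he hef
  · intro u v w huv huw hvw h1 h2
    by_cases c1 : (∃ a b, s(u,v) = s(a,b) ∧ (kG G f C β γ).Adj a b ∧
        (kG G f C β γ).Reachable v₀ a) <;>
    by_cases c2 : (∃ a b, s(u,w) = s(a,b) ∧ (kG G f C β γ).Adj a b ∧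
        (kG G f C β γ).Reachable v₀ a)
    · obtain ⟨r1, -, a1⟩ := swap_cond_reach c1
      obtain ⟨r2, -, a2⟩ := swap_cond_reach c2
      rw [swap_eq_swap_of a1 r1, swap_eq_swap_of a2 r2]
      have hne := hpc.2 huv huw hvw h1 h2
      rcases a1.2.2 with e1 | e1 <;> rcases a2.2.2 with e2 | e2 <;>
        rw [e1, e2] <;> simp_all <;> omega
    · obtain ⟨hru, -, a1⟩ := swap_cond_reach c1
      rw [swap_eq_swap_of a1 hru, swap_eq_of_not_cond c2]
      have hnot : ¬ (C s(u,w) = β ∨ C s(u,w) = γ) := by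
        intro hc
        exact c2 ⟨u, w, rfl, ⟨huw, h2, hc⟩, hru⟩
      push_neg at hnot
      split <;> [exact fun h => hnot.2 h.symm; exact fun h => hnot.1 h.symm]
    · obtain ⟨hru, -, a2⟩ := swap_cond_reach c2
      rw [swap_eq_of_not_cond c1, swap_eq_swap_of a2 hru]
      have hnot : ¬ (C s(u,v) = β ∨ C s(u,v) = γ) := by
        intro hc
        exact c1 ⟨u, v, rfl, ⟨huv, h1, hc⟩, hru⟩
      push_neg at hnot
      split <;> [exact hnot.2; exact hnot.1]
    · rw [swap_eq_of_not_cond c1, swap_eq_of_not_cond c2]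
      exact hpc.2 huv huw hvw h1 h2

/-- After swapping the component of `v₀`, if `γ` was free at `v₀` then `β` is free. -/
lemma swap_free_base (hfree : Free G f C v₀ γ) (hβγ : β ≠ γ) :
    Free G f (swapC G f C β γ v₀) v₀ β := by
  intro w hw hwf
  by_cases h : (kG G f C β γ).Adj v₀ w
  · rw [swap_eq_swap_of h (SimpleGraph.Reachable.refl _)]
    have : C s(v₀,w) = β := by
      rcases h.2.2 with hc | hc
      · exact hc
      · exact absurd hc (hfree w hw hwf)
    rw [if_pos this]
    exact hβγ.symm
  · rw [swap_eq_of_not_adj h]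
    intro hc
    exact h ⟨hw, hwf, Or.inl hc⟩

/-- Vertices not in the component keep their free colors among {β,γ}. -/
lemma swap_free_far {z : V} (hz : ¬ (kG G f C β γ).Reachable v₀ z)
    (hfree : Free G f C z β) : Free G f (swapC G f C β γ v₀) z β := by
  intro w hw hwf
  rw [swap_eq_of_not_reach (fun h => hz h)]
  exact hfree w hw hwf

end swap


lemma sym2_congr {u v w : V} (h : s(u,v) = s(u,w)) : v = w := by
  rw [Sym2.eq_iff] at h
  rcases h with ⟨-, h⟩ | ⟨h1, h2⟩
  · exact h
  · exact h2.trans h1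

lemma sxne {x a b : V} (ha : a ≠ x) (h : s(x,a) = s(x,b)) : a = b := sym2_congr h

lemma ne_f₀_of_not_mem {x y : V} {e : Sym2 V} (h : x ∉ e) : e ≠ s(x,y) := by
  intro hc; subst hc; simp at h

/-- Multifan at `x` with respect to the uncolored edge `s(x,y)` and coloring `φ`. -/
structure MF (G : SimpleGraph V) (Δ : ℕ) (x y : V) (φ : Sym2 V → ℕ) where
  p : ℕ
  F : Fin (p+1) → V
  inj : Function.Injective F
  F0 : F 0 = y
  adj : ∀ i, G.Adj x (F i)
  wit : Fin (p+1) → Fin (p+1)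
  witlt : ∀ i, i ≠ 0 → wit i < i
  witfree : ∀ i, i ≠ 0 → Free G s(x,y) φ (F (wit i)) (φ s(x, F i))

namespace MF

variable {G : SimpleGraph V} {Δ : ℕ} {x y : V} {φ : Sym2 V → ℕ}

lemma Fx (M : MF G Δ x y φ) (k : Fin (M.p+1)) : M.F k ≠ x := (M.adj k).ne'

lemma edge_ne_f₀ (M : MF G Δ x y φ) {k : Fin (M.p+1)} (hk : k ≠ 0) :
    s(x, M.F k) ≠ s(x, y) := by
  intro h
  have := sxne (M.Fx k) h
  exact hk (M.inj (by rw [this, M.F0]))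

lemma edge_ne (M : MF G Δ x y φ) {k l : Fin (M.p+1)} (hk : k ≠ l) :
    s(x, M.F k) ≠ s(x, M.F l) := by
  intro h
  exact hk (M.inj (sxne (M.Fx k) h))

/-- The key shift lemma: moving the uncolored edge along the multifan to `s(x, F i)`. -/
lemma shift (M : MF G Δ x y φ) (hφ : PC G Δ s(x,y) φ)
    (γ : ℕ) (w₀ : V) (hw₀a : G.Adj x w₀) (hw₀f : s(x,w₀) ≠ s(x,y)) (hw₀c : φ s(x,w₀) = γ)
    (i : Fin (M.p+1)) :
    ∃ ψ : Sym2 V → ℕ,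
      PC G Δ s(x, M.F i) ψ ∧
      (∀ e, x ∉ e → ψ e = φ e) ∧
      (∀ b, i < b → ψ s(x, M.F b) = φ s(x, M.F b)) ∧
      (∀ α, Free G s(x,y) φ (M.F i) α → Free G s(x, M.F i) ψ (M.F i) α) ∧
      (∀ w, G.Adj x w → s(x,w) ≠ s(x, M.F i) →
         ∃ w', G.Adj x w' ∧ s(x,w') ≠ s(x,y) ∧ φ s(x,w') = ψ s(x,w)) ∧
      (∀ w, G.Adj x w → s(x,w) ≠ s(x, M.F i) → ψ s(x,w) = γ →
         (w = w₀ ∨ ∃ m, w₀ = M.F m ∧ w = M.F (M.wit m))) ∧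
      (∃ w, G.Adj x w ∧ s(x,w) ≠ s(x, M.F i) ∧ ψ s(x,w) = γ) := by
  induction' hn : i.val using Nat.strong_induction_on with n ihn generalizing i
  subst hn
  have ih : ∀ j : Fin (M.p+1), j < i → _ := fun j hj => ihn j.val hj j rfl
  by_cases hi : i = 0
  · subst hi
    refine ⟨φ, ?_, fun _ _ => rfl, fun _ _ => rfl, ?_, ?_, ?_, ?_⟩
    · rw [M.F0]; exact hφ
    · rw [M.F0]; exact fun α h => h
    · intro w hw hwne
      refine ⟨w, hw, ?_, rfl⟩
      rw [← M.F0]; exact hwne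
    · intro w hw hwne hwc
      left
      by_contra hne
      exact hφ.2 hw hw₀a hne (by rw [← M.F0]; exact hwne) hw₀f (hwc.trans hw₀c.symm)
    · exact ⟨w₀, hw₀a, by rw [M.F0]; exact hw₀f, hw₀c⟩
  · -- inductive step
    set j := M.wit i with hjdef
    have hji : j < i := M.witlt i hi
    obtain ⟨ψj, hpc, h4, h9, h3, h10, h5, h7⟩ := ih j hji
    set ci := φ s(x, M.F i) with hcidef
    have hji' : j ≠ i := ne_of_lt hji
    have hedge_ne : s(x, M.F j) ≠ s(x, M.F i) := M.edge_ne hji'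
    have hci_lt : ci < Δ := hφ.1 _ ((G.mem_edgeSet).mpr (M.adj i)) (M.edge_ne_f₀ hi)
    have hψj_xFi : ψj s(x, M.F i) = ci := h9 i hji
    have hfree_j_ci : Free G s(x,y) φ (M.F j) ci := M.witfree i hi
    refine ⟨Function.update ψj s(x, M.F j) ci, ⟨?_, ?_⟩, ?_, ?_, ?_, ?_, ?_, ?_⟩
    · -- color bound
      intro e he hef
      simp only [Function.update_apply]
      by_cases h : e = s(x, M.F j)
      · rw [if_pos h]; exact hci_lt
      · rw [if_neg h]; exact hpc.1 e he h
    · -- properness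
      intro u v w huv huw hvw h1 h2
      simp only [Function.update_apply]
      by_cases e1 : s(u,v) = s(x, M.F j) <;> by_cases e2 : s(u,w) = s(x, M.F j)
      · exact absurd (sym2_congr (e1.trans e2.symm)) hvw
      · rw [if_pos e1, if_neg e2]
        rw [Sym2.eq_iff] at e1
        rcases e1 with ⟨hux, hvFj⟩ | ⟨huFj, hvx⟩
        · -- u = x, v = F j ; the other edge is s(x,w)
          rw [hux] at huw h2 e2 ⊢
          have hwFi : M.F i ≠ w := by
            intro hc; rw [← hc] at h2; exact h2 rfl
          have hne := hpc.2 (M.adj i) huw hwFi hedge_ne.symm e2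
          rw [hψj_xFi] at hne
          exact hne
        · -- u = F j, v = x ; other edge s(F j, w), w ≠ x
          rw [huFj] at huw ⊢
          have hwx : w ≠ x := fun hc => hvw (hvx.trans hc.symm)
          have hnx : x ∉ s(M.F j, w) := by
            simp only [Sym2.mem_iff]
            push_neg
            exact ⟨fun hc => M.Fx j hc.symm, fun hc => hwx hc.symm⟩
          rw [h4 _ hnx]
          exact fun hc => hfree_j_ci w huw (ne_f₀_of_not_mem hnx) hc.symm
      · rw [if_neg e1, if_pos e2]
        rw [Sym2.eq_iff] at e2
        rcases e2 with ⟨hux, hwFj⟩ | ⟨huFj, hwx⟩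
        · rw [hux] at huv h1 e1 ⊢
          have hvFi : v ≠ M.F i := by
            intro hc; rw [hc] at h1; exact h1 rfl
          have hne := hpc.2 huv (M.adj i) hvFi e1 hedge_ne.symm
          rw [hψj_xFi] at hne
          exact hne
        · rw [huFj] at huv ⊢
          have hvx : v ≠ x := fun hc => hvw (hc.trans hwx.symm)
          have hnx : x ∉ s(M.F j, v) := by
            simp only [Sym2.mem_iff]
            push_neg
            exact ⟨fun hc => M.Fx j hc.symm, fun hc => hvx hc.symm⟩
          rw [h4 _ hnx]
          exact hfree_j_ci v huv (ne_f₀_of_not_mem hnx)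
      · rw [if_neg e1, if_neg e2]
        exact hpc.2 huv huw hvw e1 e2
    · -- (4)
      intro e he
      have : e ≠ s(x, M.F j) := ne_f₀_of_not_mem he
      simp only [Function.update_apply]
      rw [if_neg this]
      exact h4 e he
    · -- (9)
      intro b hb
      have h1 : s(x, M.F b) ≠ s(x, M.F j) := M.edge_ne (ne_of_gt (hji.trans hb))
      simp only [Function.update_apply]
      rw [if_neg h1]
      exact h9 b (hji.trans hb)
    · -- (3)
      intro α hα w hw hwne
      have hwx : w ≠ x := by
        intro hc; subst hc
        rw [Sym2.eq_swap] at hwne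
        exact hwne rfl
      have hnx : x ∉ s(M.F i, w) := by
        simp only [Sym2.mem_iff]
        push_neg
        exact ⟨fun hc => M.Fx i hc.symm, fun hc => hwx hc.symm⟩
      simp only [Function.update_apply]
      rw [if_neg (ne_f₀_of_not_mem hnx), h4 _ hnx]
      exact hα w hw (ne_f₀_of_not_mem hnx)
    · -- (10)
      intro w hw hwne
      simp only [Function.update_apply]
      by_cases h : s(x,w) = s(x, M.F j)
      · rw [if_pos h]
        exact ⟨M.F i, M.adj i, M.edge_ne_f₀ hi, rfl⟩
      · rw [if_neg h]
        exact h10 w hw h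
    · -- (5)
      intro w hw hwne hwc
      simp only [Function.update_apply] at hwc
      by_cases h : s(x,w) = s(x, M.F j)
      · rw [if_pos h] at hwc
        -- ci = γ, so F i = w₀ and w = F j
        right
        have hFi_w₀ : M.F i = w₀ := by
          by_contra hne
          exact hφ.2 (M.adj i) hw₀a hne (M.edge_ne_f₀ hi) hw₀f (hwc.trans hw₀c.symm)
        exact ⟨i, hFi_w₀.symm, sxne (fun hc => (G.ne_of_adj hw) hc.symm) h⟩
      · rw [if_neg h] at hwc
        exact h5 w hw h hwc
    · -- (7)
      by_cases hc : ci = γ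
      · refine ⟨M.F j, M.adj j, hedge_ne, ?_⟩
        simp only [Function.update_self]
        exact hc
      · obtain ⟨w', hw'a, hw'ne, hw'c⟩ := h7
        have h1 : s(x,w') ≠ s(x, M.F i) := by
          intro hcon
          rw [hcon, hψj_xFi] at hw'c
          exact hc hw'c
        refine ⟨w', hw'a, h1, ?_⟩
        simp only [Function.update_apply]
        rw [if_neg hw'ne]
        exact hw'c


section AB

variable {G : SimpleGraph V} {Δ : ℕ} {x y : V} {φ : Sym2 V → ℕ}

/-- Lemma A: no color can be free at both `x` and a fan vertex. -/
lemma no_common_free (M : MF G Δ x y φ) (hφ : PC G Δ s(x,y) φ)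
    (hnofull : ∀ C, ¬ IsProperEdgeColoring G Δ C) (i : Fin (M.p+1)) {α : ℕ} (hαΔ : α < Δ)
    (h1 : Free G s(x,y) φ x α) (h2 : Free G s(x,y) φ (M.F i) α) : False := by
  by_cases hi : i = 0
  · subst hi
    rw [M.F0] at h2
    have hadj : G.Adj x y := by have := M.adj 0; rwa [M.F0] at this
    exact hnofull _ (fill_hole hφ hadj hαΔ h1 h2)
  · obtain ⟨ψ, hpc, h4, h9, h3, h10, h5, h7⟩ :=
      M.shift hφ (φ s(x, M.F i)) (M.F i) (M.adj i) (M.edge_ne_f₀ hi) rfl i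
    have hFx : Free G s(x, M.F i) ψ x α := by
      intro w hw hwne hc
      obtain ⟨w', hw'a, hw'f, hw'c⟩ := h10 w hw hwne
      exact h1 w' hw'a hw'f (hw'c.trans hc)
    exact hnofull _ (fill_hole hpc (M.adj i) hαΔ hFx (h3 α h2))

/-- The reach step used in Lemma B. -/
lemma reach_step (M : MF G Δ x y φ) (hφ : PC G Δ s(x,y) φ)
    (hnofull : ∀ C, ¬ IsProperEdgeColoring G Δ C)
    {β γ : ℕ} (hβΔ : β < Δ) (hγΔ : γ < Δ) (hβγ : β ≠ γ)
    (hβfree : Free G s(x,y) φ x β)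
    {w₀ : V} (hw₀a : G.Adj x w₀) (hw₀f : s(x,w₀) ≠ s(x,y)) (hw₀c : φ s(x,w₀) = γ)
    {H₀ : SimpleGraph V}
    (hH₀ : ∀ a b, H₀.Adj a b ↔
      G.Adj a b ∧ a ≠ x ∧ b ≠ x ∧ (φ s(a,b) = β ∨ φ s(a,b) = γ))
    (k : Fin (M.p+1)) (hk : Free G s(x,y) φ (M.F k) γ) :
    ∃ u, (u = w₀ ∨ ∃ m, w₀ = M.F m ∧ u = M.F (M.wit m)) ∧ u ≠ M.F k ∧
      H₀.Reachable u (M.F k) := by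
  obtain ⟨ψ, hpc, h4, h9, h3, h10, h5, h7⟩ := M.shift hφ γ w₀ hw₀a hw₀f hw₀c k
  have hψxβ : Free G s(x, M.F k) ψ x β := by
    intro w hw hwne hc
    obtain ⟨w', hw'a, hw'f, hw'c⟩ := h10 w hw hwne
    exact hβfree w' hw'a hw'f (hw'c.trans hc)
  have hψkγ : Free G s(x, M.F k) ψ (M.F k) γ := h3 γ hk
  set K := kG G s(x, M.F k) ψ β γ with hKdef
  by_cases hreach : K.Reachable (M.F k) x
  · have hH : ∀ a b, K.Adj a b → a ≠ x → b ≠ x → H₀.Adj a b := by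
      intro a b hab hax hbx
      obtain ⟨hadj, hne, hcol⟩ := hab
      have hnx : x ∉ s(a,b) := by
        simp only [Sym2.mem_iff]
        push_neg
        exact ⟨fun hc => hax hc.symm, fun hc => hbx hc.symm⟩
      rw [h4 _ hnx] at hcol
      exact (hH₀ a b).mpr ⟨hadj, hax, hbx, hcol⟩
    obtain ⟨u, hKxu, hcase⟩ := reach_extract hH hreach (M.Fx k)
    obtain ⟨huadj, hune, hucol⟩ := hKxu
    have hucγ : ψ s(x,u) = γ := by
      rcases hucol with hc | hc
      · exact absurd hc (hψxβ u huadj hune)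
      · exact hc
    have hu5 := h5 u huadj hune hucγ
    have huk : u ≠ M.F k := fun hc => hune (by rw [hc])
    rcases hcase with hc | hc
    · exact absurd hc huk
    · exact ⟨u, hu5, huk, hc⟩
  · exfalso
    have hpc' := swap_pc (v₀ := M.F k) hpc hβΔ hγΔ hβγ
    have hfb : Free G s(x, M.F k) (swapC G s(x, M.F k) ψ β γ (M.F k)) (M.F k) β :=
      swap_free_base hψkγ hβγ
    have hff : Free G s(x, M.F k) (swapC G s(x, M.F k) ψ β γ (M.F k)) x β :=
      swap_free_far hreach hψxβ
    exact hnofull _ (fill_hole hpc' (M.adj k) hβΔ hff hfb)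

/-- Lemma B: free color sets of distinct fan vertices are disjoint. -/
lemma free_disjoint (M : MF G Δ x y φ) (hφ : PC G Δ s(x,y) φ)
    (hnofull : ∀ C, ¬ IsProperEdgeColoring G Δ C)
    {β : ℕ} (hβΔ : β < Δ) (hβfree : Free G s(x,y) φ x β)
    {i j : Fin (M.p+1)} (hij : i ≠ j) {γ : ℕ} (hγΔ : γ < Δ)
    (hγi : Free G s(x,y) φ (M.F i) γ) (hγj : Free G s(x,y) φ (M.F j) γ) : False := by
  classical
  -- γ is present at x
  have hnotfx : ¬ Free G s(x,y) φ x γ :=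
    fun h => M.no_common_free hφ hnofull i hγΔ h hγi
  unfold Free at hnotfx
  push_neg at hnotfx
  obtain ⟨w₀, hw₀a, hw₀f, hw₀c⟩ := hnotfx
  have hβγ : β ≠ γ := by
    intro h
    subst h
    exact hβfree w₀ hw₀a hw₀f hw₀c
  -- the Kempe subgraph away from x, with respect to φ
  let H₀ : SimpleGraph V :=
    { Adj := fun a b => G.Adj a b ∧ a ≠ x ∧ b ≠ x ∧ (φ s(a,b) = β ∨ φ s(a,b) = γ)
      symm := ⟨by
        intro a b ⟨h1, h2, h3, h4⟩
        rw [Sym2.eq_swap] at h4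
        exact ⟨h1.symm, h3, h2, h4⟩⟩
      loopless := ⟨fun v h => (G.ne_of_adj h.1) rfl⟩ }
  have hH₀ : ∀ a b, H₀.Adj a b ↔
      G.Adj a b ∧ a ≠ x ∧ b ≠ x ∧ (φ s(a,b) = β ∨ φ s(a,b) = γ) := fun a b => Iff.rfl
  have hnf₀ : ∀ {a b : V}, H₀.Adj a b → s(a,b) ≠ s(x,y) := by
    intro a b hab
    refine ne_f₀_of_not_mem ?_
    simp only [Sym2.mem_iff]
    push_neg
    exact ⟨fun hc => hab.2.1 hc.symm, fun hc => hab.2.2.1 hc.symm⟩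
  -- maximum degree 2 in H₀
  have hdeg2 : ∀ v a b c, H₀.Adj v a → H₀.Adj v b → H₀.Adj v c →
      a = b ∨ a = c ∨ b = c := by
    intro v a b c ha hb hc
    by_contra hcon
    push_neg at hcon
    obtain ⟨hab, hac, hbc⟩ := hcon
    have dab := hφ.2 ha.1 hb.1 hab (hnf₀ ha) (hnf₀ hb)
    have dac := hφ.2 ha.1 hc.1 hac (hnf₀ ha) (hnf₀ hc)
    have dbc := hφ.2 hb.1 hc.1 hbc (hnf₀ hb) (hnf₀ hc)
    rcases ha.2.2.2 with h1 | h1 <;> rcases hb.2.2.2 with h2 | h2 <;>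
      rcases hc.2.2.2 with h3 | h3 <;> simp_all
  -- γ-free vertices have degree ≤ 1 in H₀
  have hD1free : ∀ v, Free G s(x,y) φ v γ → D1 H₀ v := by
    intro v hv a b ha hb
    have hca : φ s(v,a) = β := by
      rcases ha.2.2.2 with h | h
      · exact h
      · exact absurd h (hv a ha.1 (hnf₀ ha))
    have hcb : φ s(v,b) = β := by
      rcases hb.2.2.2 with h | h
      · exact h
      · exact absurd h (hv b hb.1 (hnf₀ hb))
    by_contra hne
    exact hφ.2 ha.1 hb.1 hne (hnf₀ ha) (hnf₀ hb) (hca.trans hcb.symm)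
  -- w₀ has degree ≤ 1 in H₀ (its x-edge already carries γ)
  have hD1w₀ : D1 H₀ w₀ := by
    have hγx : ∀ a, H₀.Adj w₀ a → φ s(w₀,a) = β := by
      intro a ha
      rcases ha.2.2.2 with h | h
      · exact h
      · exfalso
        have hs : s(w₀,x) ≠ s(x,y) := by rw [Sym2.eq_swap]; exact hw₀f
        have hcx : φ s(w₀,x) = γ := by rw [Sym2.eq_swap]; exact hw₀c
        exact hφ.2 ha.1 hw₀a.symm ha.2.2.1 (hnf₀ ha) hs (h.trans hcx.symm)
    intro a b ha hb
    by_contra hne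
    exact hφ.2 ha.1 hb.1 hne (hnf₀ ha) (hnf₀ hb) ((hγx a ha).trans (hγx b hb).symm)
  -- a γ-free fan vertex is never w₀
  have hFkw₀ : ∀ k : Fin (M.p+1), Free G s(x,y) φ (M.F k) γ → M.F k ≠ w₀ := by
    intro k hk hc
    have h1 : s(M.F k, x) = s(x, w₀) := by rw [Sym2.eq_swap, hc]
    exact hk x (M.adj k).symm (by rw [h1]; exact hw₀f) (by rw [h1]; exact hw₀c)
  by_cases hfan : ∃ m, w₀ = M.F m
  · obtain ⟨m, hm⟩ := hfan
    have hm0 : m ≠ 0 := by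
      intro h
      rw [h, M.F0] at hm
      exact hw₀f (by rw [hm])
    set a := M.wit m with hadef
    have hγa : Free G s(x,y) φ (M.F a) γ := by
      have := M.witfree m hm0
      rwa [← hm, hw₀c] at this
    have ham : a ≠ m := ne_of_lt (M.witlt m hm0)
    obtain ⟨u, hu5, hua, hr⟩ :=
      M.reach_step hφ hnofull hβΔ hγΔ hβγ hβfree hw₀a hw₀f hw₀c hH₀ a hγa
    have hu : u = M.F m := by
      rcases hu5 with h | ⟨m', hm', hu'⟩
      · rw [h, hm]
      · exfalso
        have hmm : m' = m := M.inj (hm'.symm.trans hm)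
        rw [hu', hmm] at hua
        exact hua rfl
    rw [hu] at hr
    set k₀ := if i = a then j else i with hk₀def
    have hk₀a : k₀ ≠ a := by
      rw [hk₀def]
      split
      · rename_i h
        exact fun hc => hij (h.trans hc.symm)
      · assumption
    have hγk₀ : Free G s(x,y) φ (M.F k₀) γ := by
      rw [hk₀def]
      split
      · exact hγj
      · exact hγi
    obtain ⟨u', hu'5, hu'k₀, hr'⟩ :=
      M.reach_step hφ hnofull hβΔ hγΔ hβγ hβfree hw₀a hw₀f hw₀c hH₀ k₀ hγk₀
    have hu' : u' = M.F m ∨ u' = M.F a := by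
      rcases hu'5 with h | ⟨m', hm', h⟩
      · left; rw [h, hm]
      · right
        have hmm : m' = m := M.inj (hm'.symm.trans hm)
        rw [h, hmm]
    have hk₀m : M.F k₀ ≠ M.F m := by
      rw [← hm]
      exact hFkw₀ k₀ hγk₀
    have hFma : M.F m ≠ M.F a := fun h => ham (M.inj h).symm
    have hFk₀a : M.F k₀ ≠ M.F a := fun h => hk₀a (M.inj h)
    have hD1m : D1 H₀ (M.F m) := hm ▸ hD1w₀
    rcases hu' with h | h
    · rw [h] at hr'
      exact three_leaf hdeg2 hD1m (hD1free _ hγk₀) (hD1free _ hγa)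
        hk₀m.symm hFma hFk₀a hr' hr
    · rw [h] at hr'
      exact three_leaf hdeg2 (hD1free _ hγa) (hD1free _ hγk₀) hD1m
        hFk₀a.symm hFma.symm hk₀m hr' hr.symm
  · -- w₀ is not a fan vertex: both reach steps end at w₀
    obtain ⟨u, hu5, hui, hri⟩ :=
      M.reach_step hφ hnofull hβΔ hγΔ hβγ hβfree hw₀a hw₀f hw₀c hH₀ i hγi
    obtain ⟨u', hu'5, huj, hrj⟩ :=
      M.reach_step hφ hnofull hβΔ hγΔ hβγ hβfree hw₀a hw₀f hw₀c hH₀ j hγj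
    have hu : u = w₀ := by
      rcases hu5 with h | ⟨m, hm, _⟩
      · exact h
      · exact absurd ⟨m, hm⟩ hfan
    have hu' : u' = w₀ := by
      rcases hu'5 with h | ⟨m, hm, _⟩
      · exact h
      · exact absurd ⟨m, hm⟩ hfan
    rw [hu] at hri
    rw [hu'] at hrj
    exact three_leaf hdeg2 hD1w₀ (hD1free _ hγi) (hD1free _ hγj)
      (fun h => hFkw₀ i hγi h.symm) (fun h => hFkw₀ j hγj h.symm)
      (fun h => hij (M.inj h)) hri hrj

end AB


section Maximal

variable {G : SimpleGraph V} {Δ : ℕ} {x y : V} {φ : Sym2 V → ℕ}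

/-- A multifan can be extended. -/
def Ext (M : MF G Δ x y φ) : Prop :=
  ∃ z, G.Adj x z ∧ (∀ k, z ≠ M.F k) ∧ ∃ k, Free G s(x,y) φ (M.F k) (φ s(x,z))

lemma ext_step (M : MF G Δ x y φ) (h : Ext M) :
    ∃ M' : MF G Δ x y φ, M'.p = M.p + 1 := by
  classical
  obtain ⟨z, hza, hzF, k, hk⟩ := h
  refine ⟨{
    p := M.p + 1
    F := Fin.snoc M.F z
    inj := ?_
    F0 := ?_
    adj := ?_
    wit := fun l => if h : l = Fin.last (M.p+1) then k.castSucc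
      else ((M.wit (l.castPred h)).castSucc)
    witlt := ?_
    witfree := ?_ }, rfl⟩
  · intro a b hab
    rcases eq_or_ne a (Fin.last (M.p+1)) with ha | ha <;>
      rcases eq_or_ne b (Fin.last (M.p+1)) with hb | hb
    · rw [ha, hb]
    · exfalso
      rw [ha, Fin.snoc_last] at hab
      rw [← Fin.castSucc_castPred b hb, Fin.snoc_castSucc] at hab
      exact hzF _ hab
    · exfalso
      rw [hb, Fin.snoc_last] at hab
      rw [← Fin.castSucc_castPred a ha, Fin.snoc_castSucc] at hab
      exact hzF _ hab.symm
    · rw [← Fin.castSucc_castPred a ha, Fin.snoc_castSucc,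
        ← Fin.castSucc_castPred b hb, Fin.snoc_castSucc] at hab
      have := M.inj hab
      rw [← Fin.castSucc_castPred a ha, ← Fin.castSucc_castPred b hb, this]
  · have h0 : (0 : Fin (M.p+2)) = Fin.castSucc 0 := by simp
    rw [h0, Fin.snoc_castSucc, M.F0]
  · intro i
    rcases eq_or_ne i (Fin.last (M.p+1)) with hi | hi
    · rw [hi, Fin.snoc_last]; exact hza
    · rw [← Fin.castSucc_castPred i hi, Fin.snoc_castSucc]; exact M.adj _
  · intro i hi0
    beta_reduce
    rcases eq_or_ne i (Fin.last (M.p+1)) with hi | hi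
    · rw [dif_pos hi, hi]
      exact Fin.castSucc_lt_last _
    · rw [dif_neg hi]
      have hj0 : i.castPred hi ≠ 0 := by
        intro hc
        apply hi0
        rw [← Fin.castSucc_castPred i hi, hc]
        simp
      calc ((M.wit (i.castPred hi)).castSucc : Fin (M.p+2))
          < (i.castPred hi).castSucc := by
            rw [Fin.castSucc_lt_castSucc_iff]
            exact M.witlt _ hj0
        _ = i := Fin.castSucc_castPred i hi
  · intro i hi0
    beta_reduce
    rcases eq_or_ne i (Fin.last (M.p+1)) with hi | hi
    · rw [dif_pos hi, hi, Fin.snoc_last, Fin.snoc_castSucc]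
      exact hk
    · rw [dif_neg hi]
      conv in Fin.snoc M.F z i => rw [← Fin.castSucc_castPred i hi]
      rw [Fin.snoc_castSucc, Fin.snoc_castSucc]
      have hj0 : i.castPred hi ≠ 0 := by
        intro hc
        apply hi0
        rw [← Fin.castSucc_castPred i hi, hc]
        simp
      exact M.witfree _ hj0

lemma exists_maximal (hxy : G.Adj x y) : ∃ M : MF G Δ x y φ, ¬ Ext M := by
  classical
  by_contra hcon
  push_neg at hcon
  have step : ∀ M : MF G Δ x y φ, ∃ M' : MF G Δ x y φ, M'.p = M.p + 1 :=
    fun M => ext_step M (hcon M)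
  let M0 : MF G Δ x y φ :=
    { p := 0
      F := fun _ => y
      inj := fun a b _ => Fin.ext (by omega)
      F0 := rfl
      adj := fun _ => hxy
      wit := id
      witlt := fun i hi => absurd (Fin.ext (by omega : i.val = (0 : Fin (0+1)).val)) hi
      witfree := fun i hi => absurd (Fin.ext (by omega : i.val = (0 : Fin (0+1)).val)) hi }
  let g : ℕ → MF G Δ x y φ := fun n => Nat.rec (motive := fun _ => MF G Δ x y φ) M0 (fun _ M => (step M).choose) n
  have hg : ∀ n, (g n).p = n := by
    intro n
    induction n with
    | zero => rfl
    | succ n ih =>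
      have : (g (n+1)).p = (g n).p + 1 := (step (g n)).choose_spec
      rw [this, ih]
  set M := g (Fintype.card V) with hM
  have hcard : Fintype.card V + 1 ≤ Fintype.card V := by
    have := Fintype.card_le_of_injective M.F M.inj
    rwa [Fintype.card_fin, hg] at this
  omega

end Maximal

end MF


section Count

variable {G : SimpleGraph V} [DecidableRel G.Adj]

/-- The set of colors `< Δ` free at `v`. -/
def freeSet (G : SimpleGraph V) [DecidableRel G.Adj] (Δ : ℕ) (f : Sym2 V)
    (φ : Sym2 V → ℕ) (v : V) : Finset ℕ :=
  (Finset.range Δ) \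
    (((G.neighborFinset v).filter (fun w => s(v,w) ≠ f)).image (fun w => φ s(v,w)))

lemma mem_freeSet {Δ : ℕ} {f : Sym2 V} {φ : Sym2 V → ℕ} {v : V} {α : ℕ} :
    α ∈ freeSet G Δ f φ v ↔ α < Δ ∧ Free G f φ v α := by
  unfold freeSet Free
  simp only [Finset.mem_sdiff, Finset.mem_range, Finset.mem_image, Finset.mem_filter,
    SimpleGraph.mem_neighborFinset, not_exists, not_and]
  constructor
  · rintro ⟨h1, h2⟩
    exact ⟨h1, fun w hw hwf hc => h2 w ⟨hw, hwf⟩ hc⟩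
  · rintro ⟨h1, h2⟩
    exact ⟨h1, fun w hw hc => h2 w hw.1 hw.2 hc⟩

lemma freeSet_card_ge {Δ : ℕ} {f : Sym2 V} {φ : Sym2 V → ℕ} {v : V} :
    Δ - ((G.neighborFinset v).filter (fun w => s(v,w) ≠ f)).card
      ≤ (freeSet G Δ f φ v).card := by
  have h1 := Finset.le_card_sdiff
    (((G.neighborFinset v).filter (fun w => s(v,w) ≠ f)).image (fun w => φ s(v,w)))
    (Finset.range Δ)
  rw [Finset.card_range] at h1
  have h2 := Finset.card_image_le
    (s := (G.neighborFinset v).filter (fun w => s(v,w) ≠ f)) (f := fun w => φ s(v,w))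
  exact le_trans (Nat.sub_le_sub_left h2 Δ) h1

lemma nbr_filter_eq_erase {u v : V} (huv : G.Adj u v) :
    (G.neighborFinset u).filter (fun w => s(u,w) ≠ s(u,v)) = (G.neighborFinset u).erase v := by
  ext w
  simp only [Finset.mem_filter, Finset.mem_erase, SimpleGraph.mem_neighborFinset]
  constructor
  · rintro ⟨hw, hne⟩
    exact ⟨fun hc => hne (by rw [hc]), hw⟩
  · rintro ⟨hne, hw⟩
    exact ⟨hw, fun hc => hne (sxne (fun h => (G.ne_of_adj hw) h.symm) hc)⟩

lemma freeSet_card_adj {Δ : ℕ} {φ : Sym2 V → ℕ} {u v : V} (huv : G.Adj u v) :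
    Δ - (G.degree u - 1) ≤ (freeSet G Δ s(u,v) φ u).card := by
  have h := freeSet_card_ge (G := G) (Δ := Δ) (f := s(u,v)) (φ := φ) (v := u)
  rwa [nbr_filter_eq_erase huv, Finset.card_erase_of_mem
    ((SimpleGraph.mem_neighborFinset G u v).mpr huv), SimpleGraph.card_neighborFinset_eq_degree] at h

end Count

end VAL

open VAL in
/-- Vizing's Adjacency Lemma: if `G` is Class 2 and `xy` is a critical edge of `G`,
then `x` has at least `Δ − d_G(y) + 1` neighbors of degree `Δ` other than `y`. -/
theorem vizing_adjacency_lemma {V : Type*} [Fintype V] [DecidableEq V]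
    (G : SimpleGraph V) [DecidableRel G.Adj]
    (hclass2 : chromaticIndex G = G.maxDegree + 1)
    (x y : V) (hxy : G.Adj x y)
    (hcrit : chromaticIndex (G.deleteEdges {s(x, y)}) < chromaticIndex G) :
    G.maxDegree - G.degree y + 1 ≤
      ((G.neighborFinset x).filter (fun w => G.degree w = G.maxDegree ∧ w ≠ y)).card := by
  classical
  set Δ := G.maxDegree with hΔdef
  -- no proper Δ-coloring of G
  have hnofull : ∀ C, ¬ IsProperEdgeColoring G Δ C := by
    intro C hC
    have := chromaticIndex_le_of_coloring hC
    omega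
  -- a proper Δ-coloring of G - xy
  have hlt : chromaticIndex (G.deleteEdges {s(x,y)}) ≤ Δ := by
    rw [hclass2] at hcrit
    omega
  obtain ⟨φ, hφ'⟩ := exists_coloring_chromaticIndex (G.deleteEdges {s(x,y)})
  have hφ : PC G Δ s(x,y) φ := pc_of_deleteEdges (isProperEdgeColoring_mono hφ' hlt)
  -- degree facts
  have hdy : G.degree y ≤ Δ := G.degree_le_maxDegree y
  have hdx : G.degree x ≤ Δ := G.degree_le_maxDegree x
  have hdy1 : 1 ≤ G.degree y := by
    have : x ∈ G.neighborFinset y := (SimpleGraph.mem_neighborFinset G y x).mpr hxy.symm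
    have := Finset.card_pos.mpr ⟨x, this⟩
    rwa [SimpleGraph.card_neighborFinset_eq_degree] at this
  have hdx1 : 1 ≤ G.degree x := by
    have : y ∈ G.neighborFinset x := (SimpleGraph.mem_neighborFinset G x y).mpr hxy
    have := Finset.card_pos.mpr ⟨y, this⟩
    rwa [SimpleGraph.card_neighborFinset_eq_degree] at this
  -- a color free at x
  have hxfree : ∃ β, β ∈ freeSet G Δ s(x,y) φ x := by
    have h1 := freeSet_card_adj (G := G) (Δ := Δ) (φ := φ) hxy
    have h2 : 0 < (freeSet G Δ s(x,y) φ x).card := by omega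
    obtain ⟨β, hβ⟩ := Finset.card_pos.mp h2
    exact ⟨β, hβ⟩
  obtain ⟨β, hβmem⟩ := hxfree
  obtain ⟨hβΔ, hβfree⟩ := mem_freeSet.mp hβmem
  -- maximal multifan
  obtain ⟨M, hmax⟩ := MF.exists_maximal (G := G) (Δ := Δ) (φ := φ) hxy
  -- the fan colors
  set N : Finset (Fin (M.p+1)) := Finset.univ.filter (fun k => k ≠ 0) with hNdef
  have hNcard : N.card = M.p := by
    rw [hNdef, Finset.filter_ne', Finset.card_erase_of_mem (Finset.mem_univ _),
      Finset.card_univ, Fintype.card_fin]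
    omega
  set fanC : Finset ℕ := N.image (fun l => φ s(x, M.F l)) with hfanCdef
  -- every free color of a fan vertex is a fan color
  have hsub : ∀ k, freeSet G Δ s(x,y) φ (M.F k) ⊆ fanC := by
    intro k γ hγ
    obtain ⟨hγΔ, hγf⟩ := mem_freeSet.mp hγ
    have hnfx : ¬ Free G s(x,y) φ x γ :=
      fun h => M.no_common_free hφ hnofull k hγΔ h hγf
    unfold VAL.Free at hnfx
    push_neg at hnfx
    obtain ⟨z, hza, hzf, hzc⟩ := hnfx
    have hzfan : ∃ l, z = M.F l := by
      by_contra hno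
      push_neg at hno
      exact hmax ⟨z, hza, hno, k, by rw [hzc]; exact hγf⟩
    obtain ⟨l, rfl⟩ := hzfan
    have hl0 : l ≠ 0 := by
      intro hc
      rw [hc, M.F0] at hzf
      exact hzf rfl
    exact Finset.mem_image.mpr ⟨l, Finset.mem_filter.mpr ⟨Finset.mem_univ _, hl0⟩, hzc⟩
  -- disjointness of free sets
  have hdisj : ∀ i ∈ (Finset.univ : Finset (Fin (M.p+1))), ∀ j ∈ Finset.univ, i ≠ j →
      Disjoint (freeSet G Δ s(x,y) φ (M.F i)) (freeSet G Δ s(x,y) φ (M.F j)) := by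
    intro i _ j _ hij
    rw [Finset.disjoint_left]
    intro γ hγi hγj
    obtain ⟨hγΔ, hfi⟩ := mem_freeSet.mp hγi
    obtain ⟨_, hfj⟩ := mem_freeSet.mp hγj
    exact M.free_disjoint hφ hnofull hβΔ hβfree hij hγΔ hfi hfj
  -- the sum of the free set sizes is at most p
  have hsum : ∑ k, (freeSet G Δ s(x,y) φ (M.F k)).card ≤ M.p := by
    rw [← Finset.card_biUnion hdisj]
    calc (Finset.univ.biUnion (fun k => freeSet G Δ s(x,y) φ (M.F k))).card
        ≤ fanC.card := by
          apply Finset.card_le_card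
          intro γ hγ
          obtain ⟨k, _, hk⟩ := Finset.mem_biUnion.mp hγ
          exact hsub k hk
      _ ≤ N.card := Finset.card_image_le
      _ = M.p := hNcard
  -- lower bound for the free set at y
  have h0card : Δ - G.degree y + 1 ≤ (freeSet G Δ s(x,y) φ (M.F 0)).card := by
    rw [M.F0]
    have h1 : s(x,y) = s(y,x) := Sym2.eq_swap
    have h2 := freeSet_card_adj (G := G) (Δ := Δ) (φ := φ) hxy.symm
    rw [← h1] at h2
    omega
  -- each non-Δ fan vertex contributes at least one free color
  have hk1 : ∀ k : Fin (M.p+1), G.degree (M.F k) ≠ Δ →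
      1 ≤ (freeSet G Δ s(x,y) φ (M.F k)).card := by
    intro k hkd
    have hd : G.degree (M.F k) < Δ := lt_of_le_of_ne (G.degree_le_maxDegree _) hkd
    have h1 := freeSet_card_ge (G := G) (Δ := Δ) (f := s(x,y)) (φ := φ) (v := M.F k)
    have h2 : ((G.neighborFinset (M.F k)).filter (fun w => s(M.F k, w) ≠ s(x,y))).card
        ≤ G.degree (M.F k) := by
      calc _ ≤ (G.neighborFinset (M.F k)).card := Finset.card_filter_le _ _
        _ = G.degree (M.F k) := SimpleGraph.card_neighborFinset_eq_degree G (M.F k)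
    omega
  -- split the nonzero indices by degree
  set J : Finset (Fin (M.p+1)) := N.filter (fun k => G.degree (M.F k) = Δ) with hJdef
  set Jc : Finset (Fin (M.p+1)) := N.filter (fun k => ¬ G.degree (M.F k) = Δ) with hJcdef
  have hJJc : J.card + Jc.card = M.p := by
    rw [hJdef, hJcdef, Finset.card_filter_add_card_filter_not, hNcard]
  have h0Jc : (0 : Fin (M.p+1)) ∉ Jc := by
    rw [hJcdef, hNdef]
    simp
  have hsum2 : (freeSet G Δ s(x,y) φ (M.F 0)).card + Jc.card
      ≤ ∑ k, (freeSet G Δ s(x,y) φ (M.F k)).card := by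
    have h1 : ∑ k ∈ insert 0 Jc, (freeSet G Δ s(x,y) φ (M.F k)).card
        ≤ ∑ k, (freeSet G Δ s(x,y) φ (M.F k)).card :=
      Finset.sum_le_sum_of_subset (Finset.subset_univ _)
    rw [Finset.sum_insert h0Jc] at h1
    have h2 : Jc.card ≤ ∑ k ∈ Jc, (freeSet G Δ s(x,y) φ (M.F k)).card := by
      have := Finset.card_nsmul_le_sum Jc
        (fun k => (freeSet G Δ s(x,y) φ (M.F k)).card) 1
        (fun k hk => hk1 k (Finset.mem_filter.mp hk).2)
      simpa using this
    omega
  have hfinal : Δ - G.degree y + 1 ≤ J.card := by omega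
  -- map J into the target set
  have himg : J.image M.F ⊆
      (G.neighborFinset x).filter (fun w => G.degree w = Δ ∧ w ≠ y) := by
    intro v hv
    obtain ⟨k, hk, rfl⟩ := Finset.mem_image.mp hv
    obtain ⟨hkN, hkd⟩ := Finset.mem_filter.mp hk
    have hk0 : k ≠ 0 := (Finset.mem_filter.mp hkN).2
    refine Finset.mem_filter.mpr ⟨(SimpleGraph.mem_neighborFinset G x _).mpr (M.adj k),
      hkd, ?_⟩
    intro hc
    apply hk0
    apply M.inj
    rw [hc, M.F0]
  calc Δ - G.degree y + 1 ≤ J.card := hfinal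
    _ = (J.image M.F).card := (Finset.card_image_of_injective J M.inj).symm
    _ ≤ _ := Finset.card_le_card himg
end

section
/- Let G be a Class 2 graph, e = rs₁ a critical edge, φ a proper Δ-edge-coloring of G − e, and F = (r, rs₁, s₁, rs₂, s₂, …, rs_p, s_p) a multifan with respect to e and φ. Then the vertex set {r, s₁, …, s_p} of F is φ-elementary: the sets of missing colors at these vertices are pairwise disjoint. -/
open SimpleGraph

/-- The set of colors in `[0, k)` missing at `v` under the edge coloring `C` of `G`. -/
def missingColors {V : Type*} (G : SimpleGraph V) (k : ℕ) (C : Sym2 V → ℕ) (v : V) :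
    Set ℕ :=
  {c | c < k ∧ ∀ w, G.Adj v w → C s(v, w) ≠ c}

section Aux
variable {V : Type*}

lemma sym2_ne_of_ne {x y a b : V} (h1 : x ≠ a) (h2 : x ≠ b) : s(x, y) ≠ s(a, b) := by
  intro h
  have hx : x ∈ s(a, b) := h ▸ Sym2.mem_mk_left x y
  rcases Sym2.mem_iff.mp hx with h' | h'
  · exact h1 h'
  · exact h2 h'

lemma sym2_eq_right {a b c : V} (hca : c ≠ a) (h : s(a, b) = s(a, c)) : b = c := by
  rcases Sym2.eq_iff.mp h with ⟨-, h'⟩ | ⟨h', -⟩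
  · exact h'
  · exact absurd h'.symm hca

lemma proper_ne_of_adj {H : SimpleGraph V} {k : ℕ} {ψ : Sym2 V → ℕ}
    (hψ : IsProperEdgeColoring H k ψ) {v w₁ w₂ : V} (h₁ : H.Adj v w₁) (h₂ : H.Adj v w₂)
    (hne : w₁ ≠ w₂) : ψ s(v, w₁) ≠ ψ s(v, w₂) := by
  refine hψ.2 _ (H.mem_edgeSet.mpr h₁) _ (H.mem_edgeSet.mpr h₂) ?_
    ⟨v, Sym2.mem_mk_left _ _, Sym2.mem_mk_left _ _⟩
  intro h
  rcases Sym2.eq_iff.mp h with ⟨-, h'⟩ | ⟨h', -⟩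
  · exact hne h'
  · exact H.irrefl (h' ▸ h₂)

/-- a color missing at both endpoints of `s(a,b)` does not appear on any edge meeting
`{a, b}`. -/
lemma missing_at_edge {H : SimpleGraph V} {ψ : Sym2 V → ℕ} {a b : V} {c : ℕ}
    (ha : ∀ w, H.Adj a w → ψ s(a, w) ≠ c) (hb : ∀ w, H.Adj b w → ψ s(b, w) ≠ c) :
    ∀ e ∈ H.edgeSet, (∃ x, x ∈ e ∧ x ∈ s(a, b)) → ψ e ≠ c := by
  intro e
  induction e using Sym2.ind with
  | _ u v =>
    intro he hex
    obtain ⟨x, hxe, hxab⟩ := hex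
    have he' : H.Adj u v := H.mem_edgeSet.mp he
    rcases Sym2.mem_iff.mp hxe with rfl | rfl
    · rcases Sym2.mem_iff.mp hxab with rfl | rfl
      · exact ha v he'
      · exact hb v he'
    · rw [Sym2.eq_swap]
      rcases Sym2.mem_iff.mp hxab with rfl | rfl
      · exact ha u he'.symm
      · exact hb u he'.symm

lemma update_proper [DecidableEq V] {H : SimpleGraph V} {k : ℕ} {ψ : Sym2 V → ℕ}
    (hψ : IsProperEdgeColoring H k ψ) {a b : V} {c : ℕ} (hab : H.Adj a b) (hck : c < k)
    (ha : ∀ w, H.Adj a w → ψ s(a, w) ≠ c) (hb : ∀ w, H.Adj b w → ψ s(b, w) ≠ c) :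
    IsProperEdgeColoring H k (Function.update ψ s(a, b) c) := by
  constructor
  · intro e he
    by_cases h : e = s(a, b)
    · rw [h, Function.update_self]; exact hck
    · rw [Function.update_of_ne h]; exact hψ.1 e he
  · intro e₁ he₁ e₂ he₂ hne hshare
    obtain ⟨x, hx1, hx2⟩ := hshare
    by_cases h1 : e₁ = s(a, b) <;> by_cases h2 : e₂ = s(a, b)
    · exact absurd (h1.trans h2.symm) hne
    · rw [h1, Function.update_self, Function.update_of_ne h2]
      exact (missing_at_edge ha hb e₂ he₂ ⟨x, hx2, h1 ▸ hx1⟩).symm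
    · rw [h2, Function.update_self, Function.update_of_ne h1]
      exact missing_at_edge ha hb e₁ he₁ ⟨x, hx1, h2 ▸ hx2⟩
    · rw [Function.update_of_ne h1, Function.update_of_ne h2]
      exact hψ.2 e₁ he₁ e₂ he₂ hne ⟨x, hx1, hx2⟩

end Aux
section Swap
variable {V : Type*}

open Classical in
/-- Swap colors `α`, `β` on all edges touching the set `S`. -/
noncomputable def swapColor (ψ : Sym2 V → ℕ) (α β : ℕ) (S : Set V) (e : Sym2 V) : ℕ :=
  if (ψ e = α ∨ ψ e = β) ∧ ∃ x ∈ S, x ∈ e then (if ψ e = α then β else α) else ψ e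

variable {H : SimpleGraph V} {k : ℕ} {ψ : Sym2 V → ℕ} {α β : ℕ} {S : Set V}

lemma swapColor_eq_of_not (h : ¬((ψ e = α ∨ ψ e = β) ∧ ∃ x ∈ S, x ∈ e)) :
    swapColor ψ α β S e = ψ e := by
  rw [swapColor, if_neg h]

/-- closure hypothesis: `S` is closed under edges colored `α` or `β`. -/
def SwapClosed (H : SimpleGraph V) (ψ : Sym2 V → ℕ) (α β : ℕ) (S : Set V) : Prop :=
  ∀ ⦃u w⦄, u ∈ S → H.Adj u w → (ψ s(u, w) = α ∨ ψ s(u, w) = β) → w ∈ S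

lemma swapClosed_both (hS : SwapClosed H ψ α β S) :
    ∀ e ∈ H.edgeSet, (ψ e = α ∨ ψ e = β) → (∃ x ∈ S, x ∈ e) → ∀ y ∈ e, y ∈ S := by
  intro e
  induction e using Sym2.ind with
  | _ u v =>
    intro he hcol hex y hy
    have hadj : H.Adj u v := H.mem_edgeSet.mp he
    obtain ⟨x, hxS, hxe⟩ := hex
    have huv : u ∈ S ∧ v ∈ S := by
      rcases Sym2.mem_iff.mp hxe with rfl | rfl
      · exact ⟨hxS, hS hxS hadj hcol⟩
      · refine ⟨hS hxS hadj.symm ?_, hxS⟩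
        rwa [Sym2.eq_swap]
    rcases Sym2.mem_iff.mp hy with rfl | rfl
    · exact huv.1
    · exact huv.2

lemma swapColor_proper (hψ : IsProperEdgeColoring H k ψ) (hα : α < k) (hβ : β < k)
    (hαβ : α ≠ β) (hS : SwapClosed H ψ α β S) :
    IsProperEdgeColoring H k (swapColor ψ α β S) := by
  constructor
  · intro e he
    by_cases h : (ψ e = α ∨ ψ e = β) ∧ ∃ x ∈ S, x ∈ e
    · rw [swapColor, if_pos h]
      split <;> assumption
    · rw [swapColor_eq_of_not h]; exact hψ.1 e he
  · intro e₁ he₁ e₂ he₂ hne hshare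
    obtain ⟨x, hx1, hx2⟩ := hshare
    have hold : ψ e₁ ≠ ψ e₂ := hψ.2 e₁ he₁ e₂ he₂ hne ⟨x, hx1, hx2⟩
    by_cases h1 : (ψ e₁ = α ∨ ψ e₁ = β) ∧ ∃ x ∈ S, x ∈ e₁ <;>
      by_cases h2 : (ψ e₂ = α ∨ ψ e₂ = β) ∧ ∃ x ∈ S, x ∈ e₂
    · rw [swapColor, if_pos h1, swapColor, if_pos h2]
      rcases h1.1 with hc1 | hc1 <;> rcases h2.1 with hc2 | hc2
      · exact absurd (hc1.trans hc2.symm) hold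
      · rw [if_pos hc1, if_neg (by rw [hc2]; exact (Ne.symm hαβ))]
        exact Ne.symm hαβ
      · rw [if_neg (by rw [hc1]; exact (Ne.symm hαβ)), if_pos hc2]
        exact hαβ
      · exact absurd (hc1.trans hc2.symm) hold
    · -- e₁ swapped, e₂ not
      have hxS : x ∈ S := swapClosed_both hS e₁ he₁ h1.1 h1.2 x hx1
      have hcol2 : ¬(ψ e₂ = α ∨ ψ e₂ = β) := fun hc => h2 ⟨hc, x, hxS, hx2⟩
      push_neg at hcol2
      rw [swapColor, if_pos h1, swapColor_eq_of_not h2]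
      split
      · exact Ne.symm hcol2.2
      · exact Ne.symm hcol2.1
    · have hxS : x ∈ S := swapClosed_both hS e₂ he₂ h2.1 h2.2 x hx2
      have hcol1 : ¬(ψ e₁ = α ∨ ψ e₁ = β) := fun hc => h1 ⟨hc, x, hxS, hx1⟩
      push_neg at hcol1
      rw [swapColor_eq_of_not h1, swapColor, if_pos h2]
      split
      · exact hcol1.2
      · exact hcol1.1
    · rw [swapColor_eq_of_not h1, swapColor_eq_of_not h2]; exact hold

/-- at a vertex outside `S`, nothing changes. -/
lemma swapColor_eq_at (hS : SwapClosed H ψ α β S) {u : V} (hu : u ∉ S) :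
    ∀ w, H.Adj u w → swapColor ψ α β S s(u, w) = ψ s(u, w) := by
  intro w hw
  apply swapColor_eq_of_not
  rintro ⟨hcol, x, hxS, hxe⟩
  rcases Sym2.mem_iff.mp hxe with rfl | rfl
  · exact hu hxS
  · exact hu (hS hxS hw.symm (by rwa [Sym2.eq_swap]))

lemma swapColor_missing_eq (hS : SwapClosed H ψ α β S) {u : V} (hu : u ∉ S) :
    missingColors H k (swapColor ψ α β S) u = missingColors H k ψ u := by
  ext c
  simp only [missingColors, Set.mem_setOf_eq]
  constructor
  · rintro ⟨h1, h2⟩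
    exact ⟨h1, fun w hw => by rw [← swapColor_eq_at hS hu w hw]; exact h2 w hw⟩
  · rintro ⟨h1, h2⟩
    exact ⟨h1, fun w hw => by rw [swapColor_eq_at hS hu w hw]; exact h2 w hw⟩

/-- at a vertex of `S` missing `α`, after the swap `β` is missing. -/
lemma swapColor_beta_missing (hαβ : α ≠ β) {u : V} (hu : u ∈ S)
    (hmiss : ∀ w, H.Adj u w → ψ s(u, w) ≠ α) :
    ∀ w, H.Adj u w → swapColor ψ α β S s(u, w) ≠ β := by
  intro w hw
  by_cases h : (ψ s(u, w) = α ∨ ψ s(u, w) = β) ∧ ∃ x ∈ S, x ∈ s(u, w)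
  · rw [swapColor, if_pos h]
    rcases h.1 with hc | hc
    · exact absurd hc (hmiss w hw)
    · rw [if_neg (by rw [hc]; exact Ne.symm hαβ)]
      exact hαβ
  · rw [swapColor_eq_of_not h]
    intro hc
    exact h ⟨Or.inr hc, u, hu, Sym2.mem_mk_left _ _⟩

/-- colors other than `α`, `β` that are missing stay missing. -/
lemma swapColor_other_missing {c : ℕ} (hc : c ≠ α) (hc' : c ≠ β) {u : V}
    (hmiss : ∀ w, H.Adj u w → ψ s(u, w) ≠ c) :
    ∀ w, H.Adj u w → swapColor ψ α β S s(u, w) ≠ c := by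
  intro w hw
  by_cases h : (ψ s(u, w) = α ∨ ψ s(u, w) = β) ∧ ∃ x ∈ S, x ∈ s(u, w)
  · rw [swapColor, if_pos h]
    split
    · exact Ne.symm hc'
    · exact Ne.symm hc
  · rw [swapColor_eq_of_not h]; exact hmiss w hw

end Swap
section Walks
variable {V : Type*} {H : SimpleGraph V}

lemma mem_support_cons_of_start {a w b : V} (h : H.Adj a w) (p : H.Walk w b) :
    w ∈ (SimpleGraph.Walk.cons h p).support := by
  rw [SimpleGraph.Walk.support_cons]
  exact List.mem_cons_of_mem _ p.start_mem_support

lemma no_three_aux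
    (hdeg2 : ∀ v w₁ w₂ w₃, H.Adj v w₁ → H.Adj v w₂ → H.Adj v w₃ →
      w₁ = w₂ ∨ w₁ = w₃ ∨ w₂ = w₃) :
    ∀ n (a z b c : V) (p : H.Walk a b) (q : H.Walk a c), p.length + q.length ≤ n →
      p.IsPath → q.IsPath → H.Adj z a → z ∉ p.support → z ∉ q.support → b ≠ c →
      (∀ w₁ w₂, H.Adj b w₁ → H.Adj b w₂ → w₁ = w₂) →
      (∀ w₁ w₂, H.Adj c w₁ → H.Adj c w₂ → w₁ = w₂) → False := by
  intro n
  induction n with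
  | zero =>
    intro a z b c p q hlen hp hq hza hzp hzq hbc hb hc
    cases p with
    | nil =>
      cases q with
      | nil => exact hbc rfl
      | cons h q₁ => simp [SimpleGraph.Walk.length_cons] at hlen
    | cons h p₁ => simp [SimpleGraph.Walk.length_cons] at hlen
  | succ n IH =>
    intro a z b c p q hlen hp hq hza hzp hzq hbc hb hc
    cases p with
    | nil =>
      cases q with
      | nil => exact hbc rfl
      | @cons _ w _ h q₁ =>
        have hzw : z = w := hb z w hza.symm h
        exact hzq (hzw ▸ mem_support_cons_of_start h q₁)
    | @cons _ w₁ _ h₁ p₁ =>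
      cases q with
      | nil =>
        have hzw : z = w₁ := hc z w₁ hza.symm h₁
        exact hzp (hzw ▸ mem_support_cons_of_start h₁ p₁)
      | @cons _ w₂ _ h₂ q₁ =>
        have hzw₁ : z ≠ w₁ := fun hzw => hzp (hzw ▸ mem_support_cons_of_start h₁ p₁)
        have hzw₂ : z ≠ w₂ := fun hzw => hzq (hzw ▸ mem_support_cons_of_start h₂ q₁)
        have hw : w₁ = w₂ := by
          rcases hdeg2 a z w₁ w₂ hza.symm h₁ h₂ with h | h | h
          · exact absurd h hzw₁
          · exact absurd h hzw₂
          · exact h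
        subst hw
        have hp' := (SimpleGraph.Walk.cons_isPath_iff h₁ p₁).mp hp
        have hq' := (SimpleGraph.Walk.cons_isPath_iff h₂ q₁).mp hq
        refine IH w₁ a b c p₁ q₁ ?_ hp'.1 hq'.1 h₁ hp'.2 hq'.2 hbc hb hc
        simp only [SimpleGraph.Walk.length_cons] at hlen
        omega

lemma no_three [DecidableEq V]
    (hdeg2 : ∀ v w₁ w₂ w₃, H.Adj v w₁ → H.Adj v w₂ → H.Adj v w₃ →
      w₁ = w₂ ∨ w₁ = w₃ ∨ w₂ = w₃)
    (r b c : V) (hrb : r ≠ b) (hrc : r ≠ c) (hbc : b ≠ c)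
    (hr : ∀ w₁ w₂, H.Adj r w₁ → H.Adj r w₂ → w₁ = w₂)
    (hb : ∀ w₁ w₂, H.Adj b w₁ → H.Adj b w₂ → w₁ = w₂)
    (hc : ∀ w₁ w₂, H.Adj c w₁ → H.Adj c w₂ → w₁ = w₂)
    (hRb : H.Reachable r b) (hRc : H.Reachable r c) : False := by
  obtain ⟨p₀⟩ := hRb
  obtain ⟨q₀⟩ := hRc
  obtain ⟨p, hp⟩ := p₀.toPath
  obtain ⟨q, hq⟩ := q₀.toPath
  cases p with
  | nil => exact hrb rfl
  | @cons _ w₁ _ h₁ p₁ =>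
    cases q with
    | nil => exact hrc rfl
    | @cons _ w₂ _ h₂ q₁ =>
      have hw : w₁ = w₂ := hr w₁ w₂ h₁ h₂
      subst hw
      have hp' := (SimpleGraph.Walk.cons_isPath_iff h₁ p₁).mp hp
      have hq' := (SimpleGraph.Walk.cons_isPath_iff h₂ q₁).mp hq
      exact no_three_aux hdeg2 (p₁.length + q₁.length) w₁ r b c p₁ q₁ le_rfl
        hp'.1 hq'.1 h₁ hp'.2 hq'.2 hbc hb hc

end Walks
section Main
variable {V : Type*} [Fintype V] [DecidableEq V]

/-- If a color is missing at both `r` and `f 1`, we can extend the coloring to all of `G`,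
contradicting `χ'(G) = Δ + 1`. -/
lemma extend_contradiction (G : SimpleGraph V) (Δ : ℕ)
    (hclass2 : chromaticIndex G = Δ + 1) (r s₁ : V) (hadj1 : G.Adj r s₁)
    (ψ : Sym2 V → ℕ) (hψ : IsProperEdgeColoring (G.deleteEdges {s(r, s₁)}) Δ ψ)
    (c : ℕ) (hcΔ : c < Δ)
    (h_r : ∀ w, (G.deleteEdges {s(r, s₁)}).Adj r w → ψ s(r, w) ≠ c)
    (h_1 : ∀ w, (G.deleteEdges {s(r, s₁)}).Adj s₁ w → ψ s(s₁, w) ≠ c) : False := by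
  set G' := G.deleteEdges {s(r, s₁)} with hG'
  have hsub : ∀ e ∈ G.edgeSet, e ≠ s(r, s₁) → e ∈ G'.edgeSet := by
    intro e he hne
    rw [hG', edgeSet_deleteEdges]
    exact ⟨he, by simpa using hne⟩
  have hproper : IsProperEdgeColoring G Δ (Function.update ψ s(r, s₁) c) := by
    constructor
    · intro e he
      by_cases h : e = s(r, s₁)
      · rw [h, Function.update_self]; exact hcΔ
      · rw [Function.update_of_ne h]; exact hψ.1 e (hsub e he h)
    · intro e₁ he₁ e₂ he₂ hne hshare
      obtain ⟨x, hx1, hx2⟩ := hshare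
      by_cases h1 : e₁ = s(r, s₁) <;> by_cases h2 : e₂ = s(r, s₁)
      · exact absurd (h1.trans h2.symm) hne
      · rw [h1, Function.update_self, Function.update_of_ne h2]
        exact (missing_at_edge h_r h_1 e₂ (hsub e₂ he₂ h2) ⟨x, hx2, h1 ▸ hx1⟩).symm
      · rw [h2, Function.update_self, Function.update_of_ne h1]
        exact missing_at_edge h_r h_1 e₁ (hsub e₁ he₁ h1) ⟨x, hx1, h2 ▸ hx2⟩
      · rw [Function.update_of_ne h1, Function.update_of_ne h2]
        exact hψ.2 e₁ (hsub e₁ he₁ h1) e₂ (hsub e₂ he₂ h2) hne ⟨x, hx1, hx2⟩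
  have hle : chromaticIndex G ≤ Δ := Nat.sInf_le ⟨_, hproper⟩
  omega

/-- Part A: the missing colors of `r` and of any `f i` are disjoint, for any proper
coloring satisfying the multifan condition up to `i`. -/
lemma partA (G : SimpleGraph V) (Δ : ℕ)
    (hclass2 : chromaticIndex G = Δ + 1)
    (r : V) (p : ℕ) (f : ℕ → V)
    (hinj : Set.InjOn f (Set.Icc 1 p))
    (hner : ∀ i ∈ Set.Icc 1 p, f i ≠ r)
    (hadj : ∀ i ∈ Set.Icc 1 p, G.Adj r (f i)) :
    ∀ i, 1 ≤ i → i ≤ p →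
      ∀ ψ : Sym2 V → ℕ, IsProperEdgeColoring (G.deleteEdges {s(r, f 1)}) Δ ψ →
      (∀ k, 2 ≤ k → k ≤ i → ∃ m, 1 ≤ m ∧ m ≤ k - 1 ∧
        ψ s(r, f k) ∈ missingColors (G.deleteEdges {s(r, f 1)}) Δ ψ (f m)) →
      ∀ c, c ∈ missingColors (G.deleteEdges {s(r, f 1)}) Δ ψ r →
        c ∈ missingColors (G.deleteEdges {s(r, f 1)}) Δ ψ (f i) → False := by
  set G' := G.deleteEdges {s(r, f 1)} with hG'
  have hadj' : ∀ i, 2 ≤ i → i ≤ p → G'.Adj r (f i) := by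
    intro i h2 hip
    rw [hG', deleteEdges_adj]
    refine ⟨hadj i ⟨by omega, hip⟩, ?_⟩
    simp only [Set.mem_singleton_iff]
    intro h
    have : f i = f 1 := sym2_eq_right (hner 1 ⟨le_rfl, by omega⟩) h
    have := hinj ⟨by omega, hip⟩ ⟨le_rfl, by omega⟩ this
    omega
  intro i
  induction i using Nat.strong_induction_on with
  | _ i IH =>
    intro h1i hip ψ hψ hfanψ c hcr hci
    rcases eq_or_lt_of_le h1i with h1 | h2
    · -- i = 1 : extend the coloring directly
      subst h1
      exact extend_contradiction G Δ hclass2 r (f 1) (hadj 1 ⟨le_rfl, by omega⟩) ψ hψ c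
        hcr.1 hcr.2 hci.2
    · -- i ≥ 2
      obtain ⟨m, hm1, hmle, hγ⟩ := hfanψ i h2 le_rfl
      have hmi : m < i := by omega
      have hmp : m ≤ p := by omega
      have hadjri : G'.Adj r (f i) := hadj' i h2 hip
      have hfir : f i ≠ r := hner i ⟨h1i, hip⟩
      have hfmr : f m ≠ r := hner m ⟨hm1, hmp⟩
      have hfmi : f m ≠ f i := by
        intro h
        have := hinj ⟨hm1, hmp⟩ ⟨h1i, hip⟩ h
        omega
      set γ := ψ s(r, f i) with hγdef
      set ψ₁ := Function.update ψ s(r, f i) c with hψ₁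
      have hψ₁proper : IsProperEdgeColoring G' Δ ψ₁ :=
        update_proper hψ hadjri hcr.1 hcr.2 hci.2
      have hγΔ : γ < Δ := hψ.1 _ (G'.mem_edgeSet.mpr hadjri)
      -- γ is missing at r under ψ₁
      have hγr : γ ∈ missingColors G' Δ ψ₁ r := by
        refine ⟨hγΔ, fun w hw => ?_⟩
        by_cases hwfi : w = f i
        · subst hwfi
          rw [hψ₁, Function.update_self]
          exact Ne.symm (hcr.2 (f i) hw)
        · have hne : s(r, w) ≠ s(r, f i) := fun h => hwfi (sym2_eq_right hfir h)
          rw [hψ₁, Function.update_of_ne hne]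
          exact proper_ne_of_adj hψ hw hadjri hwfi
      -- γ is missing at f m under ψ₁
      have hγm : γ ∈ missingColors G' Δ ψ₁ (f m) := by
        refine ⟨hγΔ, fun w hw => ?_⟩
        rw [hψ₁, Function.update_of_ne (sym2_ne_of_ne hfmr hfmi)]
        exact hγ.2 w hw
      -- the multifan condition holds for ψ₁ up to m
      have hfan₁ : ∀ k, 2 ≤ k → k ≤ m → ∃ m', 1 ≤ m' ∧ m' ≤ k - 1 ∧
          ψ₁ s(r, f k) ∈ missingColors G' Δ ψ₁ (f m') := by
        intro k hk2 hkm
        obtain ⟨m', h1', h2', hmiss⟩ := hfanψ k hk2 (by omega)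
        have hfkfi : f k ≠ f i := by
          intro h
          have := hinj ⟨by omega, by omega⟩ ⟨h1i, hip⟩ h
          omega
        have hedge : s(r, f k) ≠ s(r, f i) := fun h => hfkfi (sym2_eq_right hfir h)
        have hfm'r : f m' ≠ r := hner m' ⟨h1', by omega⟩
        have hfm'i : f m' ≠ f i := by
          intro h
          have := hinj ⟨h1', by omega⟩ ⟨h1i, hip⟩ h
          omega
        refine ⟨m', h1', h2', ?_⟩
        rw [hψ₁, Function.update_of_ne hedge]
        refine ⟨hmiss.1, fun w hw => ?_⟩
        rw [Function.update_of_ne (sym2_ne_of_ne hfm'r hfm'i)]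
        exact hmiss.2 w hw
      exact IH m hmi hm1 hmp ψ₁ hψ₁proper hfan₁ γ hγr hγm

end Main
section PartB
variable {V : Type*} [Fintype V] [DecidableEq V]

lemma partB (G : SimpleGraph V) [DecidableRel G.Adj] (Δ : ℕ) (hΔ : Δ = G.maxDegree)
    (hclass2 : chromaticIndex G = Δ + 1)
    (r : V) (p : ℕ) (f : ℕ → V)
    (hinj : Set.InjOn f (Set.Icc 1 p))
    (hner : ∀ i ∈ Set.Icc 1 p, f i ≠ r)
    (hadj : ∀ i ∈ Set.Icc 1 p, G.Adj r (f i))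
    (φ : Sym2 V → ℕ)
    (hφ : IsProperEdgeColoring (G.deleteEdges {s(r, f 1)}) Δ φ)
    (hfan : ∀ i ∈ Set.Icc 2 p, ∃ j ∈ Set.Icc 1 (i - 1),
      φ s(r, f i) ∈ missingColors (G.deleteEdges {s(r, f 1)}) Δ φ (f j)) :
    ∀ j, j ≤ p → ∀ i, 1 ≤ i → i < j → ∀ c,
      c ∈ missingColors (G.deleteEdges {s(r, f 1)}) Δ φ (f i) →
      c ∈ missingColors (G.deleteEdges {s(r, f 1)}) Δ φ (f j) → False := by
  set G' := G.deleteEdges {s(r, f 1)} with hG'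
  have hp1 : 1 ≤ p → True := fun _ => trivial
  have hadj' : ∀ k, 2 ≤ k → k ≤ p → G'.Adj r (f k) := by
    intro k h2 hkp
    rw [hG', deleteEdges_adj]
    refine ⟨hadj k ⟨by omega, hkp⟩, ?_⟩
    simp only [Set.mem_singleton_iff]
    intro h
    have : f k = f 1 := sym2_eq_right (hner 1 ⟨le_rfl, by omega⟩) h
    have := hinj ⟨by omega, hkp⟩ ⟨le_rfl, by omega⟩ this
    omega
  have fanφ : ∀ i₀, i₀ ≤ p → ∀ k, 2 ≤ k → k ≤ i₀ → ∃ m, 1 ≤ m ∧ m ≤ k - 1 ∧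
      φ s(r, f k) ∈ missingColors G' Δ φ (f m) := by
    intro i₀ hi₀ k hk2 hki
    obtain ⟨m, hm, hmiss⟩ := hfan k ⟨hk2, by omega⟩
    exact ⟨m, hm.1, hm.2, hmiss⟩
  have MA := partA G Δ hclass2 r p f hinj hner hadj
  intro j
  induction j using Nat.strong_induction_on with
  | _ j IH =>
    intro hjp i h1i hij c hci hcj
    have hip : i ≤ p := by omega
    have h1j : 1 ≤ j := by omega
    have h1p : 1 ≤ p := by omega
    have hαΔ : c < Δ := hci.1
    -- find β missing at r
    have hf1mem : f 1 ∈ G.neighborFinset r := (mem_neighborFinset G r (f 1)).mpr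
      (hadj 1 ⟨le_rfl, h1p⟩)
    have hdegΔ : (G.neighborFinset r).card ≤ Δ := by
      rw [(rfl : (G.neighborFinset r).card = G.degree r), hΔ]
      exact G.degree_le_maxDegree r
    have hdeg1' : 1 ≤ (G.neighborFinset r).card := Finset.card_pos.mpr ⟨f 1, hf1mem⟩
    set N := (G.neighborFinset r).erase (f 1) with hN
    set T := N.image (fun w => φ s(r, w)) with hT
    have hTcard : T.card < Δ := by
      have h1 : T.card ≤ N.card := Finset.card_image_le
      have h2 : N.card = (G.neighborFinset r).card - 1 := Finset.card_erase_of_mem hf1mem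
      omega
    have hns : ¬ (Finset.range Δ ⊆ T) := by
      intro hsub
      have := Finset.card_le_card hsub
      rw [Finset.card_range] at this
      omega
    obtain ⟨β, hβrange, hβT⟩ := Finset.not_subset.mp hns
    have hβΔ : β < Δ := Finset.mem_range.mp hβrange
    have hβmiss : β ∈ missingColors G' Δ φ r := by
      refine ⟨hβΔ, fun w hw hc => ?_⟩
      apply hβT
      have hw' := deleteEdges_adj.mp hw
      refine Finset.mem_image.mpr ⟨w, Finset.mem_erase.mpr ⟨?_, (mem_neighborFinset G r w).mpr hw'.1⟩, hc⟩
      intro hwf1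
      exact hw'.2 (by rw [hwf1]; exact Set.mem_singleton _)
    -- c ≠ β
    have hαβ : c ≠ β := by
      intro h
      exact MA i h1i hip φ hφ (fanφ i hip) c (h ▸ hβmiss) hci
    -- the (c, β)-subgraph
    set R : V → V → Prop := fun u w => G'.Adj u w ∧ (φ s(u, w) = c ∨ φ s(u, w) = β) with hRdef
    obtain ⟨HH, hHHadj⟩ : ∃ HH : SimpleGraph V, HH.Adj = R :=
      ⟨{ Adj := R,
         symm := ⟨fun u w h => ⟨h.1.symm, by rw [Sym2.eq_swap]; exact h.2⟩⟩,
         loopless := ⟨fun u h => G'.irrefl h.1⟩ }, rfl⟩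
    have hRTsym : Symmetric (Relation.ReflTransGen HH.Adj) :=
      by haveI : Std.Symm HH.Adj := ⟨fun x y hxy => hxy.symm⟩; exact fun a b h => (Relation.ReflTransGen.symmetric (r := HH.Adj)).symm a b h
    have hdeg2 : ∀ v w₁ w₂ w₃, HH.Adj v w₁ → HH.Adj v w₂ → HH.Adj v w₃ →
        w₁ = w₂ ∨ w₁ = w₃ ∨ w₂ = w₃ := by
      intro v w₁ w₂ w₃ h1 h2 h3
      rw [hHHadj] at h1 h2 h3
      by_contra hcon
      push_neg at hcon
      obtain ⟨n12, n13, n23⟩ := hcon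
      have d12 := proper_ne_of_adj hφ h1.1 h2.1 n12
      have d13 := proper_ne_of_adj hφ h1.1 h3.1 n13
      have d23 := proper_ne_of_adj hφ h2.1 h3.1 n23
      rcases h1.2 with e1 | e1 <;> rcases h2.2 with e2 | e2 <;> rcases h3.2 with e3 | e3
      · exact d12 (e1.trans e2.symm)
      · exact d12 (e1.trans e2.symm)
      · exact d13 (e1.trans e3.symm)
      · exact d23 (e2.trans e3.symm)
      · exact d23 (e2.trans e3.symm)
      · exact d13 (e1.trans e3.symm)
      · exact d12 (e1.trans e2.symm)
      · exact d12 (e1.trans e2.symm)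
    have hdeg1 : ∀ u, (∀ w, G'.Adj u w → φ s(u, w) ≠ c) →
        ∀ w₁ w₂, HH.Adj u w₁ → HH.Adj u w₂ → w₁ = w₂ := by
      intro u hm w₁ w₂ h1 h2
      rw [hHHadj] at h1 h2
      by_contra hne
      have hd := proper_ne_of_adj hφ h1.1 h2.1 hne
      have e1 : φ s(u, w₁) = β := (h1.2).resolve_left (hm w₁ h1.1)
      have e2 : φ s(u, w₂) = β := (h2.2).resolve_left (hm w₂ h2.1)
      exact hd (e1.trans e2.symm)
    have hdeg1r : ∀ w₁ w₂, HH.Adj r w₁ → HH.Adj r w₂ → w₁ = w₂ := by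
      intro w₁ w₂ h1 h2
      rw [hHHadj] at h1 h2
      by_contra hne
      have hd := proper_ne_of_adj hφ h1.1 h2.1 hne
      have e1 : φ s(r, w₁) = c := (h1.2).resolve_right (hβmiss.2 w₁ h1.1)
      have e2 : φ s(r, w₂) = c := (h2.2).resolve_right (hβmiss.2 w₂ h2.1)
      exact hd (e1.trans e2.symm)
    have hfir : f i ≠ r := hner i ⟨h1i, hip⟩
    have hfjr : f j ≠ r := hner j ⟨h1j, hjp⟩
    have hfij : f i ≠ f j := by
      intro h
      have := hinj ⟨h1i, hip⟩ ⟨h1j, hjp⟩ h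
      omega
    -- the common "swap and contradict" argument
    have KEY : ∀ i₀, 1 ≤ i₀ → i₀ ≤ p → i₀ ≤ j →
        c ∈ missingColors G' Δ φ (f i₀) →
        ¬ Relation.ReflTransGen HH.Adj (f i₀) r →
        (∀ k m, 2 ≤ k → k ≤ i₀ → 1 ≤ m → m ≤ k - 1 → φ s(r, f k) = c →
          c ∈ missingColors G' Δ φ (f m) →
          ¬ Relation.ReflTransGen HH.Adj (f i₀) (f m)) → False := by
      intro i₀ h1i₀ hi₀p hi₀j hc₀ hnr hwit
      set S := {w | Relation.ReflTransGen HH.Adj (f i₀) w} with hS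
      have hSclosed : SwapClosed G' φ c β S := by
        intro u w hu huw hcol
        refine Relation.ReflTransGen.tail hu ?_
        rw [hHHadj]
        exact ⟨huw, hcol⟩
      set φ' := swapColor φ c β S with hφ'def
      have hφ' : IsProperEdgeColoring G' Δ φ' := swapColor_proper hφ hαΔ hβΔ hαβ hSclosed
      have hrS : r ∉ S := hnr
      have hβr' : β ∈ missingColors G' Δ φ' r := by
        rw [hφ'def, swapColor_missing_eq hSclosed hrS]
        exact hβmiss
      have hv₀S : f i₀ ∈ S := Relation.ReflTransGen.refl
      have hβv' : β ∈ missingColors G' Δ φ' (f i₀) :=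
        ⟨hβΔ, swapColor_beta_missing hαβ hv₀S hc₀.2⟩
      have hfan' : ∀ k, 2 ≤ k → k ≤ i₀ → ∃ m, 1 ≤ m ∧ m ≤ k - 1 ∧
          φ' s(r, f k) ∈ missingColors G' Δ φ' (f m) := by
        intro k hk2 hki
        obtain ⟨m, hm1, hm2, hmiss⟩ := fanφ i₀ hi₀p k hk2 hki
        have hedge : φ' s(r, f k) = φ s(r, f k) :=
          swapColor_eq_at hSclosed hrS (f k) (hadj' k hk2 (by omega))
        refine ⟨m, hm1, hm2, ?_⟩
        rw [hedge]
        by_cases hcβ : φ s(r, f k) = β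
        · exact (MA m hm1 (by omega) φ hφ (fanφ m (by omega)) β hβmiss (hcβ ▸ hmiss)).elim
        by_cases hcc : φ s(r, f k) = c
        · -- the witness vertex is outside S, so its missing colors are unchanged
          have hfmS : f m ∉ S := hwit k m hk2 hki hm1 hm2 hcc (hcc ▸ hmiss)
          rw [hφ'def, swapColor_missing_eq hSclosed hfmS]
          exact hmiss
        · exact ⟨hmiss.1, swapColor_other_missing hcc hcβ hmiss.2⟩
      exact MA i₀ h1i₀ hi₀p φ' hφ' hfan' β hβr' hβv'
    -- case split on whether r is in the chain of f i
    by_cases hri : Relation.ReflTransGen HH.Adj (f i) r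
    · -- use the chain of f j
      have hrj : ¬ Relation.ReflTransGen HH.Adj (f j) r := by
        intro hrj
        exact no_three hdeg2 r (f i) (f j) (Ne.symm hfir) (Ne.symm hfjr) hfij hdeg1r
          (hdeg1 (f i) hci.2) (hdeg1 (f j) hcj.2)
          ((reachable_iff_reflTransGen _ _).mpr (hRTsym hri))
          ((reachable_iff_reflTransGen _ _).mpr (hRTsym hrj))
      refine KEY j h1j hjp le_rfl hcj hrj ?_
      intro k m hk2 hki hm1 hm2 hcc hmiss hreach
      -- m and i both have c missing, m ≤ k-1 < j, i < j
      rcases lt_trichotomy m i with hmi | hmi | hmi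
      · exact IH i hij hip m hm1 hmi c hmiss hci
      · -- m = i : but then r would be reachable from f j via f i
        subst hmi
        exact hrj (hreach.trans hri)
      · exact IH m (by omega) (by omega) i h1i hmi c hci hmiss
    · -- use the chain of f i
      refine KEY i h1i hip (by omega) hci hri ?_
      intro k m hk2 hki hm1 hm2 hcc hmiss hreach
      -- m ≤ k - 1 < i, and both m, i < j have c missing: contradiction with IH
      exact (IH i hij hip m hm1 (by omega) c hmiss hci).elim
  
end PartB

/-- Multifan elementary lemma: if `G` is Class 2 with maximum degree `Δ`,
`e = r f(1)` is a critical edge, `φ` is a proper `Δ`-edge-coloring of `G − e`, and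
`(r, r f(1), f(1), …, r f(p), f(p))` is a multifan with respect to `e` and `φ`, then
the vertex set `{r, f(1), …, f(p)}` is `φ`-elementary. -/
theorem multifan_elementary {V : Type*} [Fintype V] [DecidableEq V]
    (G : SimpleGraph V) [DecidableRel G.Adj] (Δ : ℕ) (hΔ : Δ = G.maxDegree)
    (hclass2 : chromaticIndex G = Δ + 1)
    (r : V) (p : ℕ) (hp : 1 ≤ p) (f : ℕ → V)
    (hinj : Set.InjOn f (Set.Icc 1 p))
    (hner : ∀ i ∈ Set.Icc 1 p, f i ≠ r)
    (hadj : ∀ i ∈ Set.Icc 1 p, G.Adj r (f i))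
    (hcrit : chromaticIndex (G.deleteEdges {s(r, f 1)}) < chromaticIndex G)
    (φ : Sym2 V → ℕ)
    (hφ : IsProperEdgeColoring (G.deleteEdges {s(r, f 1)}) Δ φ)
    (hfan : ∀ i ∈ Set.Icc 2 p, ∃ j ∈ Set.Icc 1 (i - 1),
      φ s(r, f i) ∈ missingColors (G.deleteEdges {s(r, f 1)}) Δ φ (f j)) :
    ∀ u ∈ insert r (f '' Set.Icc 1 p), ∀ v ∈ insert r (f '' Set.Icc 1 p), u ≠ v →
      missingColors (G.deleteEdges {s(r, f 1)}) Δ φ u ∩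
        missingColors (G.deleteEdges {s(r, f 1)}) Δ φ v = ∅ := by
  have MA := partA G Δ hclass2 r p f hinj hner hadj
  have MB := partB G Δ hΔ hclass2 r p f hinj hner hadj φ hφ hfan
  have fanφ : ∀ i₀, i₀ ≤ p → ∀ k, 2 ≤ k → k ≤ i₀ → ∃ m, 1 ≤ m ∧ m ≤ k - 1 ∧
      φ s(r, f k) ∈ missingColors (G.deleteEdges {s(r, f 1)}) Δ φ (f m) := by
    intro i₀ hi₀ k hk2 hki
    obtain ⟨m, hm, hmiss⟩ := hfan k ⟨hk2, by omega⟩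
    exact ⟨m, hm.1, hm.2, hmiss⟩
  intro u hu v hv huv
  rw [Set.eq_empty_iff_forall_notMem]
  rintro c ⟨hcu, hcv⟩
  rcases Set.mem_insert_iff.mp hu with rfl | ⟨i, hi, rfl⟩ <;>
    rcases Set.mem_insert_iff.mp hv with rfl | hv'
  · exact huv rfl
  · obtain ⟨i, hi, rfl⟩ := hv'
    exact MA i hi.1 hi.2 φ hφ (fanφ i hi.2) c hcu hcv
  · exact MA i hi.1 hi.2 φ hφ (fanφ i hi.2) c hcv hcu
  · obtain ⟨j, hj, rfl⟩ := hv'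
    rcases lt_trichotomy i j with hij | hij | hij
    · exact MB j hj.2 i hi.1 hij c hcu hcv
    · exact huv (by rw [hij])
    · exact MB i hi.2 j hj.1 hij c hcv hcu
end

section
/- Let G be a Class 2 graph, e = rs₁ a critical edge, φ a proper Δ-edge-coloring of G − e, and F a multifan centered at r with respect to e and φ. Then for every color α missing at r and every vertex s_i of the multifan with color β missing at s_i, the vertices r and s_i lie on the same (α,β)-alternating chain of G with respect to φ. -/
open SimpleGraph

/-- The spanning subgraph of `G` consisting of the edges colored `α` or `β` by `C`;
its connected components are the `(α,β)`-chains. -/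
def chainGraph {V : Type*} (G : SimpleGraph V) (C : Sym2 V → ℕ) (α β : ℕ) :
    SimpleGraph V where
  Adj v w := G.Adj v w ∧ (C s(v, w) = α ∨ C s(v, w) = β)
  symm := ⟨fun v w h => ⟨h.1.symm, by rw [Sym2.eq_swap]; exact h.2⟩⟩
  loopless := ⟨fun v h => G.irrefl h.1⟩

set_option linter.unusedSectionVars false

section Helpers
variable {V : Type*} [DecidableEq V]

lemma MF_sym2_ne {r a b : V} (hra : r ≠ a) (hba : b ≠ a) : s(r, b) ≠ s(r, a) := by
  intro heq
  rw [Sym2.eq_iff] at heq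
  rcases heq with ⟨-, h⟩ | ⟨h, -⟩
  · exact hba h
  · exact hra h

lemma MF_proper_mono {G₁ G₂ : SimpleGraph V} {Δ : ℕ} {ψ : Sym2 V → ℕ}
    (h : G₂.edgeSet ⊆ G₁.edgeSet) (hψ : IsProperEdgeColoring G₁ Δ ψ) :
    IsProperEdgeColoring G₂ Δ ψ :=
  ⟨fun e he => hψ.1 e (h he), fun e₁ h₁ e₂ h₂ => hψ.2 e₁ (h h₁) e₂ (h h₂)⟩

lemma MF_update_proper (Gbig Gsm : SimpleGraph V) (Δ : ℕ) (ψ : Sym2 V → ℕ) (a b : V)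
    (hedges : Gsm.edgeSet = Gbig.edgeSet \ {s(a, b)})
    (hψ : IsProperEdgeColoring Gsm Δ ψ) (γ : ℕ) (hγ : γ < Δ)
    (hγa : ∀ w, Gsm.Adj a w → ψ s(a, w) ≠ γ)
    (hγb : ∀ w, Gsm.Adj b w → ψ s(b, w) ≠ γ) :
    IsProperEdgeColoring Gbig Δ (Function.update ψ s(a, b) γ) := by
  have hmem : ∀ e ∈ Gbig.edgeSet, e ≠ s(a, b) → e ∈ Gsm.edgeSet := by
    intro e he hne
    rw [hedges]
    exact ⟨he, hne⟩
  have hval : ∀ e, e ≠ s(a, b) → Function.update ψ s(a, b) γ e = ψ e :=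
    fun e hne => Function.update_of_ne hne _ _
  -- an edge of Gsm touching a or b does not get color γ
  have key : ∀ e ∈ Gsm.edgeSet, (∃ v, v ∈ s(a, b) ∧ v ∈ e) → ψ e ≠ γ := by
    intro e he ⟨v, hv1, hv2⟩
    rw [Sym2.mem_iff] at hv1
    obtain ⟨w, rfl⟩ := Sym2.mem_iff_exists.mp hv2
    have hadj : Gsm.Adj v w := Gsm.mem_edgeSet.mp he
    rcases hv1 with rfl | rfl
    · exact hγa w hadj
    · exact hγb w hadj
  constructor
  · intro e he
    by_cases hne : e = s(a, b)
    · rw [hne, Function.update_self]; exact hγ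
    · rw [hval e hne]
      exact hψ.1 e (hmem e he hne)
  · intro e₁ h₁ e₂ h₂ hne hshare
    by_cases hc1 : e₁ = s(a, b) <;> by_cases hc2 : e₂ = s(a, b)
    · exact absurd (hc1.trans hc2.symm) hne
    · rw [hc1, Function.update_self, hval e₂ hc2]
      have := key e₂ (hmem e₂ h₂ hc2) (by rwa [hc1] at hshare)
      exact fun h => this h.symm
    · rw [hc2, Function.update_self, hval e₁ hc1]
      exact key e₁ (hmem e₁ h₁ hc1)
        (by obtain ⟨v, hv1, hv2⟩ := hshare; rw [hc2] at hv2; exact ⟨v, hv2, hv1⟩)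
    · rw [hval e₁ hc1, hval e₂ hc2]
      exact hψ.2 e₁ (hmem e₁ h₁ hc1) e₂ (hmem e₂ h₂ hc2) hne hshare

lemma MF_missing_update (G' : SimpleGraph V) (Δ : ℕ) (ψ : Sym2 V → ℕ) (x : V)
    (e : Sym2 V) (γ c : ℕ) (hx : x ∉ e) (h : c ∈ missingColors G' Δ ψ x) :
    c ∈ missingColors G' Δ (Function.update ψ e γ) x := by
  refine ⟨h.1, fun w hw => ?_⟩
  have hne : s(x, w) ≠ e := by
    intro he
    exact hx (he ▸ Sym2.mem_mk_left x w)
  rw [Function.update_of_ne hne _ _]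
  exact h.2 w hw
end Helpers

section KL
variable {V : Type*} [DecidableEq V]

lemma MF_no_common_missing (G G' : SimpleGraph V) (Δ : ℕ)
    (hclass2 : chromaticIndex G = Δ + 1)
    (r : V) (p : ℕ) (hp : 1 ≤ p) (f : ℕ → V)
    (hinj : Set.InjOn f (Set.Icc 1 p))
    (hner : ∀ i ∈ Set.Icc 1 p, f i ≠ r)
    (hadj : ∀ i ∈ Set.Icc 1 p, G.Adj r (f i))
    (hG' : G' = G.deleteEdges {s(r, f 1)}) :
    ∀ i, i ∈ Set.Icc 1 p → ∀ ψ, IsProperEdgeColoring G' Δ ψ →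
      (∀ t ∈ Set.Icc 2 i, ∃ j ∈ Set.Icc 1 (t - 1),
        ψ s(r, f t) ∈ missingColors G' Δ ψ (f j)) →
      ∀ γ, γ ∈ missingColors G' Δ ψ r → γ ∈ missingColors G' Δ ψ (f i) → False := by
  have h1p : (1 : ℕ) ∈ Set.Icc 1 p := ⟨le_refl 1, hp⟩
  have hr1 : r ≠ f 1 := (hner 1 h1p).symm
  have hedges : G'.edgeSet = G.edgeSet \ {s(r, f 1)} := by
    rw [hG', edgeSet_deleteEdges]
  -- adjacency of r and f a in G' for a ≠ 1
  have hG'adj : ∀ a ∈ Set.Icc 1 p, a ≠ 1 → G'.Adj r (f a) := by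
    intro a ha ha1
    rw [hG', deleteEdges_adj]
    refine ⟨hadj a ha, ?_⟩
    simp only [Set.mem_singleton_iff]
    exact MF_sym2_ne hr1 (fun h => ha1 (hinj ha h1p h))
  intro i
  induction i using Nat.strong_induction_on with
  | _ i IH =>
    intro hi ψ hψ hfan γ hγr hγf
    obtain ⟨hi1, hip⟩ := hi
    by_cases hione : i = 1
    · -- base case : color the missing edge s(r, f 1) with γ, contradiction with Class 2
      subst hione
      have hC : IsProperEdgeColoring G Δ (Function.update ψ s(r, f 1) γ) :=
        MF_update_proper G G' Δ ψ r (f 1) hedges hψ γ hγr.1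
          (fun w hw => hγr.2 w hw) (fun w hw => hγf.2 w hw)
      have hle : chromaticIndex G ≤ Δ := Nat.sInf_le ⟨_, hC⟩
      omega
    · -- inductive step : shift
      have hi2 : 2 ≤ i := by omega
      have hiIcc : i ∈ Set.Icc 1 p := ⟨hi1, hip⟩
      obtain ⟨j, hj, hmem⟩ := hfan i ⟨hi2, le_refl i⟩
      obtain ⟨hj1, hji⟩ := hj
      have hjp : j ∈ Set.Icc 1 p := ⟨hj1, by omega⟩
      have hji' : j < i := by omega
      have hG'rfi : G'.Adj r (f i) := hG'adj i hiIcc hione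
      set γ' := ψ s(r, f i) with hγ'def
      set ψ' := Function.update ψ s(r, f i) γ with hψ'def
      -- properness of ψ'
      have hψ' : IsProperEdgeColoring G' Δ ψ' := by
        refine MF_update_proper G' (G'.deleteEdges {s(r, f i)}) Δ ψ r (f i)
          (edgeSet_deleteEdges _) (MF_proper_mono ?_ hψ) γ hγr.1 ?_ ?_
        · rw [edgeSet_deleteEdges]; exact Set.diff_subset
        · exact fun w hw => hγr.2 w ((deleteEdges_adj.mp hw).1)
        · exact fun w hw => hγf.2 w ((deleteEdges_adj.mp hw).1)
      -- γ' is missing at r under ψ'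
      have hγ'r : γ' ∈ missingColors G' Δ ψ' r := by
        refine ⟨hψ.1 _ (G'.mem_edgeSet.mpr hG'rfi), fun w hw => ?_⟩
        by_cases hc : s(r, w) = s(r, f i)
        · rw [hψ'def, hc, Function.update_self]
          intro h
          exact hγr.2 (f i) hG'rfi (h ▸ rfl)
        · rw [hψ'def, Function.update_of_ne hc _ _]
          exact hψ.2 _ (G'.mem_edgeSet.mpr hw) _ (G'.mem_edgeSet.mpr hG'rfi) hc
            ⟨r, Sym2.mem_mk_left r w, Sym2.mem_mk_left r (f i)⟩
      -- γ' is missing at f j under ψ'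
      have hfj_notmem : f j ∉ s(r, f i) := by
        rw [Sym2.mem_iff]
        rintro (h | h)
        · exact hner j hjp h
        · exact (fun h' => Nat.ne_of_lt hji' h') (hinj hjp hiIcc h)
      have hγ'fj : γ' ∈ missingColors G' Δ ψ' (f j) :=
        MF_missing_update G' Δ ψ (f j) _ γ γ' hfj_notmem hmem
      -- fan property of ψ' up to j
      have hfan' : ∀ t ∈ Set.Icc 2 j, ∃ j' ∈ Set.Icc 1 (t - 1),
          ψ' s(r, f t) ∈ missingColors G' Δ ψ' (f j') := by
        intro t ⟨ht2, htj⟩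
        have htIcc : t ∈ Set.Icc 1 p := ⟨by omega, by omega⟩
        have hti : t ≠ i := by omega
        have hne : s(r, f t) ≠ s(r, f i) :=
          MF_sym2_ne (hner i hiIcc).symm (fun h => hti (hinj htIcc hiIcc h))
        obtain ⟨j', hj', hmem'⟩ := hfan t ⟨ht2, by omega⟩
        refine ⟨j', hj', ?_⟩
        rw [hψ'def, Function.update_of_ne hne _ _]
        have hfj'_notmem : f j' ∉ s(r, f i) := by
          rw [Sym2.mem_iff]
          obtain ⟨hj'1, hj't⟩ := hj'
          have hj'Icc : j' ∈ Set.Icc 1 p := ⟨hj'1, by omega⟩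
          rintro (h | h)
          · exact hner j' hj'Icc h
          · exact (by omega : j' ≠ i) (hinj hj'Icc hiIcc h)
        exact MF_missing_update G' Δ ψ (f j') _ γ _ hfj'_notmem hmem'
      exact IH j hji' hjp ψ' hψ' hfan' γ' hγ'r hγ'fj
end KL

section Swap
variable {V : Type*} [DecidableEq V]

open Classical in
/-- Swap colors `α`, `β` on all edges meeting the chain component of `x`. -/
noncomputable def MF_swap (H : SimpleGraph V) (ψ : Sym2 V → ℕ) (α β : ℕ) (x : V) :
    Sym2 V → ℕ := fun e =>
  if (ψ e = α ∨ ψ e = β) ∧ ∃ u ∈ e, H.Reachable x u then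
    (if ψ e = α then β else α) else ψ e

lemma MF_swap_of {H : SimpleGraph V} {ψ : Sym2 V → ℕ} {α β : ℕ} {x : V} {e : Sym2 V}
    (h : (ψ e = α ∨ ψ e = β) ∧ ∃ u ∈ e, H.Reachable x u) :
    MF_swap H ψ α β x e = if ψ e = α then β else α := by
  rw [MF_swap, if_pos h]

lemma MF_swap_of_not {H : SimpleGraph V} {ψ : Sym2 V → ℕ} {α β : ℕ} {x : V} {e : Sym2 V}
    (h : ¬((ψ e = α ∨ ψ e = β) ∧ ∃ u ∈ e, H.Reachable x u)) :
    MF_swap H ψ α β x e = ψ e := by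
  rw [MF_swap, if_neg h]

lemma MF_swap_mem {H : SimpleGraph V} {ψ : Sym2 V → ℕ} {α β : ℕ} {x : V} {e : Sym2 V}
    (h : (ψ e = α ∨ ψ e = β) ∧ ∃ u ∈ e, H.Reachable x u) :
    MF_swap H ψ α β x e = α ∨ MF_swap H ψ α β x e = β := by
  rw [MF_swap_of h]
  by_cases hc : ψ e = α
  · rw [if_pos hc]; exact Or.inr rfl
  · rw [if_neg hc]; exact Or.inl rfl
end Swap

section Main
variable {V : Type*} [DecidableEq V]

lemma MF_linked (G G' : SimpleGraph V) (Δ : ℕ)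
    (hclass2 : chromaticIndex G = Δ + 1)
    (r : V) (p : ℕ) (hp : 1 ≤ p) (f : ℕ → V)
    (hinj : Set.InjOn f (Set.Icc 1 p))
    (hner : ∀ i ∈ Set.Icc 1 p, f i ≠ r)
    (hadj : ∀ i ∈ Set.Icc 1 p, G.Adj r (f i))
    (hG' : G' = G.deleteEdges {s(r, f 1)}) :
    ∀ i, i ∈ Set.Icc 1 p → ∀ ψ, IsProperEdgeColoring G' Δ ψ →
      (∀ t ∈ Set.Icc 2 i, ∃ j ∈ Set.Icc 1 (t - 1),
        ψ s(r, f t) ∈ missingColors G' Δ ψ (f j)) →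
      ∀ α ∈ missingColors G' Δ ψ r, ∀ β ∈ missingColors G' Δ ψ (f i),
        (chainGraph G' ψ α β).Reachable r (f i) := by
  have h1p : (1 : ℕ) ∈ Set.Icc 1 p := ⟨le_refl 1, hp⟩
  have hr1 : r ≠ f 1 := (hner 1 h1p).symm
  have hG'adj : ∀ a ∈ Set.Icc 1 p, a ≠ 1 → G'.Adj r (f a) := by
    intro a ha ha1
    rw [hG', deleteEdges_adj]
    refine ⟨hadj a ha, ?_⟩
    simp only [Set.mem_singleton_iff]
    exact MF_sym2_ne hr1 (fun h => ha1 (hinj ha h1p h))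
  intro i
  induction i using Nat.strong_induction_on with
  | _ i IH =>
    intro hi ψ hψ hfan α hα β hβ
    by_contra hreach
    set H := chainGraph G' ψ α β with hH
    have hαβ : α ≠ β := fun h =>
      MF_no_common_missing G G' Δ hclass2 r p hp f hinj hner hadj hG' i hi ψ hψ hfan
        α hα (h ▸ hβ)
    set ψ' := MF_swap H ψ α β (f i) with hψ'
    have swap_of : ∀ e, (ψ e = α ∨ ψ e = β) ∧ (∃ u ∈ e, H.Reachable (f i) u) →
        ψ' e = if ψ e = α then β else α := fun _ h => MF_swap_of h
    have swap_not : ∀ e, ¬((ψ e = α ∨ ψ e = β) ∧ (∃ u ∈ e, H.Reachable (f i) u)) →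
        ψ' e = ψ e := fun _ h => MF_swap_of_not h
    have swap_mem : ∀ e, (ψ e = α ∨ ψ e = β) ∧ (∃ u ∈ e, H.Reachable (f i) u) →
        ψ' e = α ∨ ψ' e = β := fun _ h => MF_swap_mem h
    -- every vertex of a swapped edge is reachable from f i
    have F1 : ∀ e ∈ G'.edgeSet, (ψ e = α ∨ ψ e = β) →
        (∃ u ∈ e, H.Reachable (f i) u) → ∀ v ∈ e, H.Reachable (f i) v := by
      intro e
      induction e using Sym2.ind with
      | _ a b =>
        rintro he hcol ⟨u, hu, hur⟩ v hv
        have hab : H.Reachable a b :=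
          SimpleGraph.Adj.reachable (show (chainGraph G' ψ α β).Adj a b from ⟨G'.mem_edgeSet.mp he, hcol⟩)
        rw [Sym2.mem_iff] at hu hv
        rcases hu with rfl | rfl <;> rcases hv with rfl | rfl
        · exact hur
        · exact hur.trans hab
        · exact hur.trans hab.symm
        · exact hur
    -- edges at r are unchanged
    have F3 : ∀ w, G'.Adj r w → ψ' s(r, w) = ψ s(r, w) := by
      intro w hw
      refine swap_not _ ?_
      rintro ⟨hcol, hex⟩
      exact hreach ((F1 _ (G'.mem_edgeSet.mpr hw) hcol hex r (Sym2.mem_mk_left r w)).symm)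
    -- ψ' is proper
    have hψ'proper : IsProperEdgeColoring G' Δ ψ' := by
      constructor
      · intro e he
        by_cases hs : (ψ e = α ∨ ψ e = β) ∧ ∃ u ∈ e, H.Reachable (f i) u
        · rcases swap_mem e hs with h | h <;> rw [h]
          · exact hα.1
          · exact hβ.1
        · rw [swap_not e hs]; exact hψ.1 e he
      · intro e₁ h₁ e₂ h₂ hne hshare
        have hcol := hψ.2 e₁ h₁ e₂ h₂ hne hshare
        by_cases s1 : (ψ e₁ = α ∨ ψ e₁ = β) ∧ ∃ u ∈ e₁, H.Reachable (f i) u <;>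
          by_cases s2 : (ψ e₂ = α ∨ ψ e₂ = β) ∧ ∃ u ∈ e₂, H.Reachable (f i) u
        · rw [swap_of e₁ s1, swap_of e₂ s2]
          rcases s1.1 with h1 | h1 <;> rcases s2.1 with h2 | h2
          · exact absurd (h1.trans h2.symm) hcol
          · rw [if_pos h1, if_neg (by rw [h2]; exact Ne.symm hαβ)]
            exact Ne.symm hαβ
          · rw [if_neg (by rw [h1]; exact Ne.symm hαβ), if_pos h2]
            exact hαβ
          · exact absurd (h1.trans h2.symm) hcol
        · rw [swap_not e₂ s2]
          have hψe2 : ¬(ψ e₂ = α ∨ ψ e₂ = β) := by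
            intro hcol2
            obtain ⟨v, hv1, hv2⟩ := hshare
            exact s2 ⟨hcol2, v, hv2, F1 e₁ h₁ s1.1 s1.2 v hv1⟩
          rcases swap_mem e₁ s1 with h | h <;> rw [h]
          · exact fun hh => hψe2 (Or.inl hh.symm)
          · exact fun hh => hψe2 (Or.inr hh.symm)
        · rw [swap_not e₁ s1]
          have hψe1 : ¬(ψ e₁ = α ∨ ψ e₁ = β) := by
            intro hcol1
            obtain ⟨v, hv1, hv2⟩ := hshare
            exact s1 ⟨hcol1, v, hv1, F1 e₂ h₂ s2.1 s2.2 v hv2⟩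
          rcases swap_mem e₂ s2 with h | h <;> rw [h]
          · exact fun hh => hψe1 (Or.inl hh)
          · exact fun hh => hψe1 (Or.inr hh)
        · rw [swap_not e₁ s1, swap_not e₂ s2]; exact hcol
    -- α is missing at r under ψ'
    have hαr' : α ∈ missingColors G' Δ ψ' r :=
      ⟨hα.1, fun w hw => by rw [F3 w hw]; exact hα.2 w hw⟩
    -- α is missing at f i under ψ'
    have hαfi' : α ∈ missingColors G' Δ ψ' (f i) := by
      refine ⟨hα.1, fun w hw => ?_⟩
      by_cases hc : ψ s(f i, w) = α
      · rw [swap_of _ ⟨Or.inl hc, f i, Sym2.mem_mk_left _ _, Reachable.refl _⟩, if_pos hc]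
        exact Ne.symm hαβ
      · by_cases hc2 : ψ s(f i, w) = β
        · exact absurd hc2 (hβ.2 w hw)
        · rw [swap_not _ (fun h => h.1.elim hc hc2)]
          exact hc
    by_cases hgood : ∀ t ∈ Set.Icc 2 i, ∃ j ∈ Set.Icc 1 (t - 1),
        ψ' s(r, f t) ∈ missingColors G' Δ ψ' (f j)
    · exact MF_no_common_missing G G' Δ hclass2 r p hp f hinj hner hadj hG' i hi
        ψ' hψ'proper hgood α hαr' hαfi'
    · push_neg at hgood
      obtain ⟨t, ht, hfail⟩ := hgood
      obtain ⟨ht2, hti⟩ := ht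
      obtain ⟨hi1, hip⟩ := hi
      have htIcc : t ∈ Set.Icc 1 p := ⟨by omega, by omega⟩
      have hG'rt : G'.Adj r (f t) := hG'adj t htIcc (by omega)
      obtain ⟨j, hj, hc⟩ := hfan t ⟨ht2, hti⟩
      obtain ⟨hj1, hjt⟩ := hj
      have hjp : j ∈ Set.Icc 1 p := ⟨hj1, by omega⟩
      have hnot := hfail j ⟨hj1, hjt⟩
      rw [F3 (f t) hG'rt] at hnot
      have h2 : ¬ (ψ s(r, f t) < Δ ∧ ∀ w, G'.Adj (f j) w → ψ' s(f j, w) ≠ ψ s(r, f t)) :=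
        hnot
      have h4 := not_and.mp h2 hc.1
      push_neg at h4
      obtain ⟨w, hw, hcw⟩ := h4
      have hswapped : (ψ s(f j, w) = α ∨ ψ s(f j, w) = β) ∧
          ∃ u ∈ s(f j, w), H.Reachable (f i) u := by
        by_contra hns
        rw [swap_not _ hns] at hcw
        exact hc.2 w hw hcw
      have hcαβ : ψ s(r, f t) = α ∨ ψ s(r, f t) = β := by
        rcases swap_mem _ hswapped with h | h
        · exact Or.inl (hcw.symm.trans h)
        · exact Or.inr (hcw.symm.trans h)
      have hcβ : ψ s(r, f t) = β := by
        rcases hcαβ with h | h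
        · exact absurd h (hα.2 (f t) hG'rt)
        · exact h
      have hreachfj : H.Reachable (f i) (f j) :=
        F1 _ (G'.mem_edgeSet.mpr hw) hswapped.1 hswapped.2 (f j) (Sym2.mem_mk_left _ _)
      have hβfj : β ∈ missingColors G' Δ ψ (f j) := hcβ ▸ hc
      have hIH := IH j (by omega) hjp ψ hψ
        (fun t' ht' => hfan t' ⟨ht'.1, le_trans ht'.2 (by omega : j ≤ i)⟩) α hα β hβfj
      exact hreach (hIH.trans hreachfj.symm)
end Main

/-- If `G` is Class 2, `e = r f(1)` is a critical edge, `φ ∈ C^Δ(G − e)` and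
`(r, r f(1), f(1), …, r f(p), f(p))` is a multifan, then for every color `α` missing
at `r` and every `i` with color `β` missing at `f i`, the vertices `r` and `f i` are
`(α,β)`-linked, i.e. lie on the same `(α,β)`-chain of `G − e`. -/
theorem multifan_linked {V : Type*} [Fintype V] [DecidableEq V]
    (G : SimpleGraph V) [DecidableRel G.Adj] (Δ : ℕ) (hΔ : Δ = G.maxDegree)
    (hclass2 : chromaticIndex G = Δ + 1)
    (r : V) (p : ℕ) (hp : 1 ≤ p) (f : ℕ → V)
    (hinj : Set.InjOn f (Set.Icc 1 p))
    (hner : ∀ i ∈ Set.Icc 1 p, f i ≠ r)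
    (hadj : ∀ i ∈ Set.Icc 1 p, G.Adj r (f i))
    (hcrit : chromaticIndex (G.deleteEdges {s(r, f 1)}) < chromaticIndex G)
    (φ : Sym2 V → ℕ)
    (hφ : IsProperEdgeColoring (G.deleteEdges {s(r, f 1)}) Δ φ)
    (hfan : ∀ i ∈ Set.Icc 2 p, ∃ j ∈ Set.Icc 1 (i - 1),
      φ s(r, f i) ∈ missingColors (G.deleteEdges {s(r, f 1)}) Δ φ (f j)) :
    ∀ α ∈ missingColors (G.deleteEdges {s(r, f 1)}) Δ φ r,
      ∀ i ∈ Set.Icc 1 p,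
        ∀ β ∈ missingColors (G.deleteEdges {s(r, f 1)}) Δ φ (f i),
          (chainGraph (G.deleteEdges {s(r, f 1)}) φ α β).Reachable r (f i) := by
  intro α hα i hi β hβ
  exact MF_linked G (G.deleteEdges {s(r, f 1)}) Δ hclass2 r p hp f hinj hner hadj rfl
    i hi φ hφ (fun t ht => hfan t ⟨ht.1, le_trans ht.2 hi.2⟩) α hα β hβ
end

section
/- Let G be an HZ-graph with maximum degree Δ ≥ 3, r a Δ-vertex with N_{Δ−1}(r) = {s₁,…,s_{Δ−2}}, φ ∈ C^Δ(G − rs₁), and S = S_φ(r, s₁:s_t:s_{Δ−2}) a pseudo-multifan with maximum multifan F = F_φ(r, s₁:s_t). Then the vertices s_{t+1},…,s_{Δ−2} can be partitioned into rotations with respect to φ; equivalently, the map sending each s_i (i ∈ [t+1, Δ−2]) to its unique missing color is a bijection onto the set of colors {φ(rs_i) : i ∈ [t+1, Δ−2]}. -/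
open SimpleGraph

/-- Rotation lemma for pseudo-multifans: let `G` be an HZ-graph with `Δ ≥ 3`, `r` a
`Δ`-vertex whose `(Δ−1)`-neighborhood is enumerated by `f 1, …, f (Δ−2)`,
`φ ∈ C^Δ(G − r f(1))`, and `S = (r, f 1, …, f t, …, f (Δ−2))` a pseudo-multifan whose
maximum multifan is `F = (r, f 1, …, f t)` (so `F` is a multifan, it is maximum at `r`,
and `V(S)` is `φ'`-elementary for every `F`-stable `φ'`).  Then
`f (t+1), …, f (Δ−2)` partition into rotations with respect to `φ`; equivalently, each
`f i` with `i ∈ [t+1, Δ−2]` misses exactly one color `m i`, and `i ↦ m i` is a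
bijection from `[t+1, Δ−2]` onto the set of colors `{φ(r f i) : i ∈ [t+1, Δ−2]}`. -/
theorem pseudo_multifan_rotations {V : Type*} [Fintype V] [DecidableEq V]
    (G : SimpleGraph V) [DecidableRel G.Adj] (Δ : ℕ) (hΔdef : Δ = G.maxDegree)
    (hΔ3 : 3 ≤ Δ)
    (hconn : G.Connected) (hclass2 : chromaticIndex G = Δ + 1)
    (hcore : ∀ v : V, G.degree v = Δ →
      ((G.neighborFinset v).filter (fun w => G.degree w = Δ)).card ≤ 2)
    (r : V) (hr : G.degree r = Δ)
    (f : ℕ → V) (hinj : Set.InjOn f (Set.Icc 1 (Δ - 2)))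
    (hnbr : ∀ i ∈ Set.Icc 1 (Δ - 2), G.Adj r (f i) ∧ G.degree (f i) = Δ - 1)
    (hall : ∀ w : V, G.Adj r w → G.degree w = Δ - 1 → ∃ i ∈ Set.Icc 1 (Δ - 2), f i = w)
    (φ : Sym2 V → ℕ)
    (hφ : IsProperEdgeColoring (G.deleteEdges {s(r, f 1)}) Δ φ)
    (t : ℕ) (ht1 : 1 ≤ t) (ht2 : t ≤ Δ - 2)
    -- F = (r, r f(1), f 1, …, r f(t), f t) is a multifan with respect to r f(1) and φ:
    (hfan : ∀ i ∈ Set.Icc 2 t, ∃ j ∈ Set.Icc 1 (i - 1),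
      φ s(r, f i) ∈ missingColors (G.deleteEdges {s(r, f 1)}) Δ φ (f j))
    -- (P1) F is maximum at r: every multifan with respect to some edge r s₁' and some
    -- proper Δ-coloring of G − r s₁' has at most t non-central vertices:
    (hmax : ∀ s₁' : V, G.Adj r s₁' → G.degree s₁' = Δ - 1 →
      ∀ ψ : Sym2 V → ℕ, IsProperEdgeColoring (G.deleteEdges {s(r, s₁')}) Δ ψ →
        ∀ (q : ℕ) (g : ℕ → V), 1 ≤ q → Set.InjOn g (Set.Icc 1 q) → g 1 = s₁' →
          (∀ i ∈ Set.Icc 1 q, G.Adj r (g i) ∧ G.degree (g i) = Δ - 1) →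
          (∀ i ∈ Set.Icc 2 q, ∃ j ∈ Set.Icc 1 (i - 1),
            ψ s(r, g i) ∈ missingColors (G.deleteEdges {s(r, s₁')}) Δ ψ (g j)) →
          q ≤ t)
    -- (P2) V(S) is φ'-elementary for every F-stable coloring φ':
    (hstable : ∀ φ' : Sym2 V → ℕ,
      IsProperEdgeColoring (G.deleteEdges {s(r, f 1)}) Δ φ' →
      missingColors (G.deleteEdges {s(r, f 1)}) Δ φ' r =
        missingColors (G.deleteEdges {s(r, f 1)}) Δ φ r →
      (∀ i ∈ Set.Icc 1 t,
        missingColors (G.deleteEdges {s(r, f 1)}) Δ φ' (f i) =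
          missingColors (G.deleteEdges {s(r, f 1)}) Δ φ (f i)) →
      (∀ i ∈ Set.Icc 2 t, φ' s(r, f i) = φ s(r, f i)) →
      ∀ u ∈ insert r (f '' Set.Icc 1 (Δ - 2)), ∀ v ∈ insert r (f '' Set.Icc 1 (Δ - 2)),
        u ≠ v →
        missingColors (G.deleteEdges {s(r, f 1)}) Δ φ' u ∩
          missingColors (G.deleteEdges {s(r, f 1)}) Δ φ' v = ∅) :
    ∃ m : ℕ → ℕ,
      (∀ i ∈ Set.Icc (t + 1) (Δ - 2),
        missingColors (G.deleteEdges {s(r, f 1)}) Δ φ (f i) = {m i}) ∧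
      Set.InjOn m (Set.Icc (t + 1) (Δ - 2)) ∧
      m '' Set.Icc (t + 1) (Δ - 2) =
        (fun i => φ s(r, f i)) '' Set.Icc (t + 1) (Δ - 2) := by
  
  classical
  obtain ⟨hlt, hprop⟩ := hφ
  set G' := G.deleteEdges {s(r, f 1)} with hG'
  have hΔ2 : 1 ≤ Δ - 2 := by omega
  have h1mem : (1:ℕ) ∈ Set.Icc 1 (Δ - 2) := ⟨le_refl 1, hΔ2⟩
  have hfr : ∀ i ∈ Set.Icc 1 (Δ - 2), f i ≠ r := fun i hi => ((hnbr i hi).1).ne'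
  have hff1 : ∀ i ∈ Set.Icc 2 (Δ - 2), f i ≠ f 1 := by
    intro i hi h
    obtain ⟨hi1, hi2⟩ := hi
    have := hinj ⟨by omega, hi2⟩ h1mem h
    omega
  have hmem12 : ∀ i ∈ Set.Icc 2 (Δ - 2), i ∈ Set.Icc 1 (Δ - 2) := by
    intro i hi
    obtain ⟨hi1, hi2⟩ := hi
    exact ⟨by omega, hi2⟩
  have hAdj' : ∀ i ∈ Set.Icc 2 (Δ - 2), G'.Adj r (f i) := by
    intro i hi
    rw [hG', SimpleGraph.deleteEdges_adj]
    refine ⟨(hnbr i (hmem12 i hi)).1, ?_⟩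
    simp only [Set.mem_singleton_iff, Sym2.congr_right]
    exact hff1 i hi
  have hEdge' : ∀ i ∈ Set.Icc 2 (Δ - 2), s(r, f i) ∈ G'.edgeSet := by
    intro i hi
    exact (SimpleGraph.mem_edgeSet _).mpr (hAdj' i hi)
  -- the missing-color finsets
  set M : V → Finset ℕ :=
    fun v => (Finset.range Δ).filter (fun c => ∀ w, G'.Adj v w → φ s(v, w) ≠ c) with hM
  have hMeq : ∀ v, missingColors G' Δ φ v = ↑(M v) := by
    intro v
    ext c
    simp [missingColors, hM]
  -- counting missing colors
  have hMcard : ∀ v, (M v).card + G'.degree v = Δ := by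
    intro v
    set P : Finset ℕ := (G'.neighborFinset v).image (fun w => φ s(v, w)) with hP
    have hPcard : P.card = G'.degree v := by
      rw [hP, Finset.card_image_of_injOn, SimpleGraph.degree]
      intro w₁ hw₁ w₂ hw₂ hcol
      by_contra hne
      have h₁ : s(v, w₁) ∈ G'.edgeSet :=
        (SimpleGraph.mem_edgeSet _).mpr ((SimpleGraph.mem_neighborFinset _ _ _).mp hw₁)
      have h₂ : s(v, w₂) ∈ G'.edgeSet :=
        (SimpleGraph.mem_edgeSet _).mpr ((SimpleGraph.mem_neighborFinset _ _ _).mp hw₂)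
      have hnee : s(v, w₁) ≠ s(v, w₂) := fun h => hne (Sym2.congr_right.mp h)
      exact hprop _ h₁ _ h₂ hnee ⟨v, by simp, by simp⟩ hcol
    have hPsub : P ⊆ Finset.range Δ := by
      intro c hc
      rw [hP] at hc
      obtain ⟨w, hw, rfl⟩ := Finset.mem_image.mp hc
      exact Finset.mem_range.mpr
        (hlt _ ((SimpleGraph.mem_edgeSet _).mpr ((SimpleGraph.mem_neighborFinset _ _ _).mp hw)))
    have hMP : M v = Finset.range Δ \ P := by
      ext c
      simp only [hM, Finset.mem_filter, Finset.mem_sdiff, Finset.mem_range, hP,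
        Finset.mem_image, SimpleGraph.mem_neighborFinset, not_exists]
      tauto
    have hle : P.card ≤ Δ := by
      simpa using Finset.card_le_card hPsub
    rw [hMP, Finset.card_sdiff_of_subset hPsub, Finset.card_range, hPcard]
    have := hPcard
    omega
  -- degrees in G'
  have hNr : G'.neighborFinset r = (G.neighborFinset r).erase (f 1) := by
    ext w
    simp only [SimpleGraph.mem_neighborFinset, hG', SimpleGraph.deleteEdges_adj,
      Finset.mem_erase, Set.mem_singleton_iff, Sym2.congr_right]
    tauto
  have hdeg_r : G'.degree r = Δ - 1 := by
    rw [SimpleGraph.degree, hNr, Finset.card_erase_of_mem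
      ((SimpleGraph.mem_neighborFinset _ _ _).mpr (hnbr 1 h1mem).1)]
    rw [← SimpleGraph.degree, hr]
  have hN1 : G'.neighborFinset (f 1) = (G.neighborFinset (f 1)).erase r := by
    ext w
    simp only [SimpleGraph.mem_neighborFinset, hG', SimpleGraph.deleteEdges_adj,
      Finset.mem_erase, Set.mem_singleton_iff, Sym2.eq_iff]
    have h1r : f 1 ≠ r := hfr 1 h1mem
    tauto
  have hdeg_f1 : G'.degree (f 1) = Δ - 2 := by
    rw [SimpleGraph.degree, hN1, Finset.card_erase_of_mem
      ((SimpleGraph.mem_neighborFinset _ _ _).mpr (hnbr 1 h1mem).1.symm)]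
    rw [← SimpleGraph.degree, (hnbr 1 h1mem).2]
    omega
  have hdeg_fi : ∀ i ∈ Set.Icc 2 (Δ - 2), G'.degree (f i) = Δ - 1 := by
    intro i hi
    obtain ⟨hi1, hi2⟩ := hi
    have hii : i ∈ Set.Icc 2 (Δ - 2) := ⟨hi1, hi2⟩
    have hNi : G'.neighborFinset (f i) = G.neighborFinset (f i) := by
      ext w
      simp only [SimpleGraph.mem_neighborFinset, hG', SimpleGraph.deleteEdges_adj,
        Set.mem_singleton_iff, Sym2.eq_iff]
      constructor
      · exact fun h => h.1
      · intro h
        refine ⟨h, ?_⟩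
        rintro (⟨h1, -⟩ | ⟨h2, -⟩)
        · exact hfr i (hmem12 i hii) h1
        · exact hff1 i hii h2
    rw [SimpleGraph.degree, hNi, ← SimpleGraph.degree, (hnbr i (hmem12 i hii)).2]
  have hcard_r : (M r).card = 1 := by have := hMcard r; omega
  have hcard_f1 : (M (f 1)).card = 2 := by
    have := hMcard (f 1); rw [hdeg_f1] at this; omega
  have hcard_fi : ∀ i ∈ Set.Icc 2 (Δ - 2), (M (f i)).card = 1 := by
    intro i hi
    have := hMcard (f i); rw [hdeg_fi i hi] at this; omega
  -- elementarity for φ itself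
  have helem : ∀ u ∈ insert r (f '' Set.Icc 1 (Δ - 2)),
      ∀ v ∈ insert r (f '' Set.Icc 1 (Δ - 2)), u ≠ v → Disjoint (M u) (M v) := by
    intro u hu v hv huv
    have h := hstable φ ⟨hlt, hprop⟩ rfl (fun _ _ => rfl) (fun _ _ => rfl) u hu v hv huv
    rw [hMeq u, hMeq v] at h
    rw [Finset.disjoint_left]
    intro a hau hav
    have : a ∈ (↑(M u) ∩ ↑(M v) : Set ℕ) := ⟨hau, hav⟩
    rw [h] at this
    exact this
  have hmemS : ∀ i ∈ Set.Icc 1 (Δ - 2), f i ∈ insert r (f '' Set.Icc 1 (Δ - 2)) :=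
    fun i hi => Set.mem_insert_iff.mpr (Or.inr ⟨i, hi, rfl⟩)
  have hrS : r ∈ insert r (f '' Set.Icc 1 (Δ - 2)) := Set.mem_insert _ _
  -- the missing color function
  set m : ℕ → ℕ := fun i =>
    if h : (M (f i)).Nonempty then (M (f i)).min' h else 0 with hm
  have hMi : ∀ i ∈ Set.Icc 2 (Δ - 2), M (f i) = {m i} := by
    intro i hi
    have hne : (M (f i)).Nonempty := Finset.card_pos.mp (by rw [hcard_fi i hi]; omega)
    have hmem : m i ∈ M (f i) := by
      rw [hm]; simp only [dif_pos hne]; exact Finset.min'_mem _ hne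
    exact ((Finset.eq_of_subset_of_card_le (Finset.singleton_subset_iff.mpr hmem)
      (by rw [hcard_fi i hi]; simp))).symm
  have hsub : Set.Icc (t+1) (Δ - 2) ⊆ Set.Icc 2 (Δ - 2) := by
    intro i hi
    obtain ⟨hi1, hi2⟩ := hi
    exact ⟨by omega, hi2⟩
  -- maximality: φ(r f i) is not missing at f j for j ≤ t
  have hnotlow : ∀ i ∈ Set.Icc (t+1) (Δ - 2), ∀ j ∈ Set.Icc 1 t,
      φ s(r, f i) ∉ M (f j) := by
    intro i hi j hj hcon
    obtain ⟨hit, hiD⟩ := hi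
    obtain ⟨hj1, hjt⟩ := hj
    set g : ℕ → V := fun k => if k = t + 1 then f i else f k with hg
    have hgi : ∀ k, 1 ≤ k → k ≤ t → g k = f k := by
      intro k hk1 hk2; rw [hg]; simp only [if_neg (by omega : k ≠ t + 1)]
    have hglast : g (t+1) = f i := by rw [hg]; simp
    have hkmem : ∀ k ∈ Set.Icc 1 (t+1), (if k = t + 1 then i else k) ∈ Set.Icc 1 (Δ - 2) := by
      intro k hk
      obtain ⟨hk1, hk2⟩ := hk
      by_cases h : k = t + 1
      · simp only [if_pos h]
        exact ⟨by omega, hiD⟩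
      · simp only [if_neg h]
        exact ⟨hk1, by omega⟩
    have hgf : ∀ k ∈ Set.Icc 1 (t+1), g k = f (if k = t + 1 then i else k) := by
      intro k hk; rw [hg]; by_cases h : k = t+1 <;> simp [h]
    have := hmax (f 1) (hnbr 1 h1mem).1 (hnbr 1 h1mem).2 φ ⟨hlt, hprop⟩ (t+1) g
      (by omega)
      (by
        intro a ha b hb hab
        have ha' : a ∈ Set.Icc 1 (t+1) := ha
        have hb' : b ∈ Set.Icc 1 (t+1) := hb
        obtain ⟨ha1, ha2⟩ := ha
        obtain ⟨hb1, hb2⟩ := hb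
        rw [hgf a ha', hgf b hb'] at hab
        have := hinj (hkmem a ha') (hkmem b hb') hab
        by_cases h1 : a = t + 1 <;> by_cases h2 : b = t + 1 <;>
          simp only [h1, h2, if_true, if_pos, if_neg, reduceIte] at this <;> omega)
      (by rw [hgi 1 (le_refl 1) ht1])
      (by
        intro k hk
        rw [hgf k hk]
        exact hnbr _ (hkmem k hk))
      (by
        intro k hk
        obtain ⟨hk1, hk2⟩ := hk
        by_cases h : k = t + 1
        · subst h
          refine ⟨j, ⟨hj1, by omega⟩, ?_⟩
          rw [hglast, hgi j hj1 hjt, hMeq]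
          exact hcon
        · have hk' : k ∈ Set.Icc 2 t := ⟨hk1, by omega⟩
          obtain ⟨j', hj', hmem⟩ := hfan k hk'
          obtain ⟨hj'1, hj'2⟩ := hj'
          refine ⟨j', ⟨hj'1, hj'2⟩, ?_⟩
          rw [hgi k (by omega) (by omega), hgi j' hj'1 (by omega)]
          exact hmem)
    omega
  -- key counting step: each φ(r f i) is missing at some f j, j ∈ [t+1, Δ-2]
  have hkey : ∀ i ∈ Set.Icc (t+1) (Δ - 2), ∃ j ∈ Set.Icc (t+1) (Δ - 2),
      φ s(r, f i) ∈ M (f j) := by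
    intro i hi
    by_contra hcon
    push_neg at hcon
    set c := φ s(r, f i) with hc
    have hclt : c < Δ := hlt _ (hEdge' i (hsub hi))
    have hcr : c ∉ M r := by
      intro hmem
      rw [hM] at hmem
      exact (Finset.mem_filter.mp hmem).2 (f i) (hAdj' i (hsub hi)) rfl
    have hnotany : ∀ j ∈ Set.Icc 1 (Δ - 2), c ∉ M (f j) := by
      intro j hj
      obtain ⟨hj1, hj2⟩ := hj
      by_cases h : j ≤ t
      · exact hnotlow i hi j ⟨hj1, h⟩
      · exact hcon j ⟨by omega, hj2⟩
    -- the big finset of vertices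
    set SS : Finset V := insert r ((Finset.Icc 1 (Δ - 2)).image f) with hSS
    have hSSmem : ∀ v ∈ SS, v ∈ insert r (f '' Set.Icc 1 (Δ - 2)) := by
      intro v hv
      rw [hSS] at hv
      rcases Finset.mem_insert.mp hv with h | h
      · exact h ▸ hrS
      · obtain ⟨j, hj, rfl⟩ := Finset.mem_image.mp h
        exact hmemS j (by simpa using hj)
    have hrnot : r ∉ (Finset.Icc 1 (Δ - 2)).image f := by
      intro h
      obtain ⟨j, hj, hje⟩ := Finset.mem_image.mp h
      exact hfr j (by simpa using hj) hje
    have hcardB : (SS.biUnion M).card = Δ := by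
      rw [Finset.card_biUnion (fun x hx y hy hxy => helem x (hSSmem x hx) y (hSSmem y hy) hxy)]
      rw [hSS, Finset.sum_insert hrnot, hcard_r]
      rw [Finset.sum_image (by
        intro x hx y hy hxy
        exact hinj (by simpa using hx) (by simpa using hy) hxy)]
      have hsplit : Finset.Icc 1 (Δ - 2) = insert 1 (Finset.Icc 2 (Δ - 2)) := by
        ext k; simp only [Finset.mem_Icc, Finset.mem_insert]; omega
      rw [hsplit, Finset.sum_insert (by simp), hcard_f1]
      rw [Finset.sum_congr rfl (fun j hj => hcard_fi j (by simpa using hj))]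
      simp only [Finset.sum_const, smul_eq_mul, mul_one, Nat.card_Icc]
      omega
    have hBsub : SS.biUnion M ⊆ (Finset.range Δ).erase c := by
      intro a ha
      obtain ⟨v, hv, hav⟩ := Finset.mem_biUnion.mp ha
      have halt : a < Δ := by
        rw [hM] at hav; exact Finset.mem_range.mp (Finset.mem_filter.mp hav).1
      refine Finset.mem_erase.mpr ⟨?_, Finset.mem_range.mpr halt⟩
      rintro rfl
      rcases Finset.mem_insert.mp hv with h | h
      · exact hcr (h ▸ hav)
      · obtain ⟨j, hj, rfl⟩ := Finset.mem_image.mp h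
        exact hnotany j (by simpa using hj) hav
    have := Finset.card_le_card hBsub
    rw [hcardB, Finset.card_erase_of_mem (Finset.mem_range.mpr hclt), Finset.card_range]
      at this
    omega
  -- injectivity of m
  have hminj : Set.InjOn m (Set.Icc (t+1) (Δ - 2)) := by
    intro i hi j hj hij
    by_contra hne
    obtain ⟨hia, hib⟩ := hi
    obtain ⟨hja, hjb⟩ := hj
    have hi1 : i ∈ Set.Icc 1 (Δ - 2) := ⟨by omega, hib⟩
    have hj1 : j ∈ Set.Icc 1 (Δ - 2) := ⟨by omega, hjb⟩
    have hfij : f i ≠ f j := fun h => hne (hinj hi1 hj1 h)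
    have hdisj := helem (f i) (hmemS i hi1) (f j) (hmemS j hj1) hfij
    rw [hMi i (hsub ⟨hia, hib⟩), hMi j (hsub ⟨hja, hjb⟩), hij] at hdisj
    simp at hdisj
  -- finset versions of the images
  have hIcceq : Set.Icc (t+1) (Δ - 2) = ↑(Finset.Icc (t+1) (Δ - 2)) := by
    simp
  have hBA : (Finset.Icc (t+1) (Δ - 2)).image (fun i => φ s(r, f i)) ⊆
      (Finset.Icc (t+1) (Δ - 2)).image m := by
    intro c hc
    obtain ⟨i, hi, rfl⟩ := Finset.mem_image.mp hc
    obtain ⟨j, hj, hmem⟩ := hkey i (by simpa using hi)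
    rw [hMi j (hsub hj), Finset.mem_singleton] at hmem
    exact Finset.mem_image.mpr ⟨j, by simpa using hj, hmem.symm⟩
  have hcardφ : ((Finset.Icc (t+1) (Δ - 2)).image (fun i => φ s(r, f i))).card =
      (Finset.Icc (t+1) (Δ - 2)).card := by
    rw [Finset.card_image_of_injOn]
    intro i hi j hj hcol
    by_contra hne
    have hi' : i ∈ Set.Icc (t+1) (Δ - 2) := by simpa using hi
    have hj' : j ∈ Set.Icc (t+1) (Δ - 2) := by simpa using hj
    obtain ⟨hia, hib⟩ := hi'
    obtain ⟨hja, hjb⟩ := hj'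
    have hi'' : i ∈ Set.Icc (t+1) (Δ - 2) := ⟨hia, hib⟩
    have hj'' : j ∈ Set.Icc (t+1) (Δ - 2) := ⟨hja, hjb⟩
    have hfij : f i ≠ f j := fun h => hne (hinj ⟨by omega, hib⟩ ⟨by omega, hjb⟩ h)
    have hnee : s(r, f i) ≠ s(r, f j) := fun h => hfij (Sym2.congr_right.mp h)
    exact hprop _ (hEdge' i (hsub hi'')) _ (hEdge' j (hsub hj'')) hnee
      ⟨r, by simp, by simp⟩ hcol
  have hcardm : ((Finset.Icc (t+1) (Δ - 2)).image m).card ≤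
      (Finset.Icc (t+1) (Δ - 2)).card := Finset.card_image_le
  have hfineq : (Finset.Icc (t+1) (Δ - 2)).image (fun i => φ s(r, f i)) =
      (Finset.Icc (t+1) (Δ - 2)).image m :=
    Finset.eq_of_subset_of_card_le hBA (by omega)
  refine ⟨m, ?_, hminj, ?_⟩
  · intro i hi
    rw [hMeq, hMi i (hsub hi)]
    simp
  · rw [hIcceq, ← Finset.coe_image, ← Finset.coe_image, hfineq]
end

section
/- Let G be an HZ-graph with maximum degree Δ ≥ 7. Suppose A, B₁, …, B_t are nonempty pairwise disjoint sets of Δ-vertices such that: all vertices in A have the same (Δ−1)-neighborhood N of size Δ−2; all vertices in each B_i share a common (Δ−1)-neighborhood intersecting N in exactly Δ−3 vertices; |A| ≥ 3 and |B_i| ≥ 3 for all i; t ≥ Δ−2; the set N is independent and every vertex of N has degree Δ−1 with all its Δ-neighbors in A ∪ B₁ ∪ … ∪ B_t having the stated adjacencies. Then counting edges between A ∪ B and N gives 3(Δ−2) + 3t(Δ−3) ≤ (Δ−1)(Δ−2), which is impossible for Δ ≥ 7. -/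
open SimpleGraph
open Finset

/-- The edge-counting contradiction in the proof of the main theorem: in a graph of
maximum degree `Δ ≥ 7`, there cannot exist nonempty pairwise disjoint sets
`A, B 1, …, B t` of `Δ`-vertices with `|A| ≥ 3`, `|B i| ≥ 3`, `t ≥ Δ − 2`, all vertices
of `A` having the same `(Δ−1)`-neighborhood `N` of size `Δ − 2`, all vertices of each
`B i` sharing a common `(Δ−1)`-neighborhood meeting `N` in exactly `Δ − 3` vertices,
`N` independent, and every vertex of `N` of degree `Δ − 1`: counting the edges between
`A ∪ B₁ ∪ … ∪ B_t` and `N` gives `3(Δ−2) + 3t(Δ−3) ≤ (Δ−1)(Δ−2)`, which is impossible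
for `Δ ≥ 7`. -/
theorem edge_count_contradiction {V : Type*} [Fintype V] [DecidableEq V]
    (G : SimpleGraph V) [DecidableRel G.Adj] (Δ t : ℕ)
    (A N : Finset V) (B : Fin t → Finset V)
    (hΔ : 7 ≤ Δ) (hΔdef : Δ = G.maxDegree)
    (hAcard : 3 ≤ A.card) (hBcard : ∀ i, 3 ≤ (B i).card) (ht : Δ - 2 ≤ t)
    (hNcard : N.card = Δ - 2)
    (hdegA : ∀ a ∈ A, G.degree a = Δ)
    (hdegB : ∀ i, ∀ b ∈ B i, G.degree b = Δ)
    (hdegN : ∀ v ∈ N, G.degree v = Δ - 1)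
    (hdisjAB : ∀ i, Disjoint A (B i))
    (hdisjBB : ∀ i j, i ≠ j → Disjoint (B i) (B j))
    (hAN : ∀ a ∈ A, (G.neighborFinset a).filter (fun w => G.degree w = Δ - 1) = N)
    (hBN : ∀ i, ∃ Ni : Finset V,
      (∀ b ∈ B i, (G.neighborFinset b).filter (fun w => G.degree w = Δ - 1) = Ni) ∧
      (Ni ∩ N).card = Δ - 3)
    (hNind : ∀ u ∈ N, ∀ v ∈ N, ¬ G.Adj u v) :
    False := by
  classical
  obtain ⟨A', hA'sub, hA'card⟩ := A.exists_subset_card_eq hAcard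
  choose B' hB'sub hB'card using fun i => (B i).exists_subset_card_eq (hBcard i)
  choose Ni hNi hNiN using hBN
  set f : V → ℕ := fun s => (G.neighborFinset s ∩ N).card with hf
  -- double counting: for any S, ∑_{s∈S} f s ≤ ∑_{v∈N} deg v
  have key : ∀ S : Finset V, ∑ s ∈ S, f s ≤ ∑ v ∈ N, G.degree v := by
    intro S
    have h1 : ∑ s ∈ S, f s = ∑ v ∈ N, (S.filter (fun s => G.Adj s v)).card := by
      have h0 : ∀ s, f s = ∑ v ∈ N, if G.Adj s v then 1 else 0 := by
        intro s
        have hx : G.neighborFinset s ∩ N = N.filter (fun v => G.Adj s v) := by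
          ext v; simp [mem_neighborFinset, and_comm]
        show (G.neighborFinset s ∩ N).card = _
        rw [hx, Finset.card_filter]
      rw [Finset.sum_congr rfl (fun s _ => h0 s), Finset.sum_comm]
      exact Finset.sum_congr rfl (fun v _ => (Finset.card_filter _ _).symm)
    rw [h1]
    apply Finset.sum_le_sum
    intro v hv
    rw [← SimpleGraph.card_neighborFinset_eq_degree]
    apply Finset.card_le_card
    intro s hs
    simp only [Finset.mem_filter] at hs
    simp [mem_neighborFinset, hs.2.symm]
  -- upper bound
  have hupper : ∑ v ∈ N, G.degree v = (Δ - 1) * (Δ - 2) := by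
    rw [Finset.sum_congr rfl hdegN, Finset.sum_const, hNcard, smul_eq_mul, mul_comm]
  -- the set S
  set S : Finset V := A' ∪ Finset.univ.biUnion B' with hS
  have hdisj1 : Disjoint A' (Finset.univ.biUnion B') := by
    rw [Finset.disjoint_biUnion_right]
    exact fun i _ => ((hdisjAB i).mono hA'sub (hB'sub i))
  have hsum : ∑ s ∈ S, f s = ∑ s ∈ A', f s + ∑ i, ∑ s ∈ B' i, f s := by
    rw [hS, Finset.sum_union hdisj1, Finset.sum_biUnion]
    intro i _ j _ hij
    exact (hdisjBB i j hij).mono (hB'sub i) (hB'sub j)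
  -- lower bounds
  have hfA : ∀ s ∈ A', f s = Δ - 2 := by
    intro s hs
    have hsA := hA'sub hs
    have hNsub : N ⊆ G.neighborFinset s := by
      rw [← hAN s hsA]; exact Finset.filter_subset _ _
    have : G.neighborFinset s ∩ N = N := Finset.inter_eq_right.2 hNsub
    simp [hf, this, hNcard]
  have hfB : ∀ i, ∀ s ∈ B' i, Δ - 3 ≤ f s := by
    intro i s hs
    have hsB := hB'sub i hs
    have hNsub : Ni i ⊆ G.neighborFinset s := by
      rw [← hNi i s hsB]; exact Finset.filter_subset _ _
    calc Δ - 3 = (Ni i ∩ N).card := (hNiN i).symm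
      _ ≤ (G.neighborFinset s ∩ N).card :=
        Finset.card_le_card (Finset.inter_subset_inter_right hNsub)
  have hlow : 3 * (Δ - 2) + t * (3 * (Δ - 3)) ≤ ∑ s ∈ S, f s := by
    rw [hsum]
    have h1 : ∑ s ∈ A', f s = 3 * (Δ - 2) := by
      rw [Finset.sum_congr rfl hfA, Finset.sum_const, hA'card, smul_eq_mul]
    have h2 : ∀ i : Fin t, 3 * (Δ - 3) ≤ ∑ s ∈ B' i, f s := by
      intro i
      calc 3 * (Δ - 3) = ∑ _s ∈ B' i, (Δ - 3) := by
            rw [Finset.sum_const, hB'card i, smul_eq_mul]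
        _ ≤ ∑ s ∈ B' i, f s := Finset.sum_le_sum (fun s hs => hfB i s hs)
    have h3 : t * (3 * (Δ - 3)) ≤ ∑ i, ∑ s ∈ B' i, f s := by
      calc t * (3 * (Δ - 3)) = ∑ _i : Fin t, 3 * (Δ - 3) := by simp [mul_comm]
        _ ≤ _ := Finset.sum_le_sum (fun i _ => h2 i)
    omega
  have hmain : 3 * (Δ - 2) + t * (3 * (Δ - 3)) ≤ (Δ - 1) * (Δ - 2) :=
    le_trans hlow (le_trans (key S) hupper.le)
  -- arithmetic contradiction
  have ht' : (Δ - 2) * (3 * (Δ - 3)) ≤ t * (3 * (Δ - 3)) :=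
    Nat.mul_le_mul_right _ ht
  obtain ⟨d, rfl⟩ : ∃ d, Δ = d + 7 := ⟨Δ - 7, by omega⟩
  have e1 : d + 7 - 2 = d + 5 := by omega
  have e2 : d + 7 - 3 = d + 4 := by omega
  have e3 : d + 7 - 1 = d + 6 := by omega
  rw [e1, e2] at hmain ht'
  rw [e3] at hmain
  nlinarith [hmain, ht']
end
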